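/- arXiv:2412.02579 — 9 statements merged into one kernel-verified Lean document; each statement's English description precedes it below -/
import Mathlib

section
/- If J and K are subsets of the index set I that both disintegrate an event C in a factored space Ω = ∏_{i∈I} Ω_i (i.e., C = C_J × C_{I∖J} and C = C_K × C_{I∖K}, where C_L denotes the projection of C to coordinates L), then J ∩ K disintegrates C and J ∪ K disintegrates C. -/
/-- `J` disintegrates `C` if `C = C_J × C_{I∖J}`, i.e. `C` equals the set of `ω`
whose `J`-coordinates agree with some element of `C` and whose `I∖J`-coordinates
agree with some element of `C`. -/
def Disintegrates {I : Type*} {Ω : I → Type*} (J : Set I) (C : Set (∀ i, Ω i)) : Prop :=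
  C = {ω | (∃ c ∈ C, ∀ j ∈ J, ω j = c j) ∧ (∃ c ∈ C, ∀ j ∉ J, ω j = c j)}

/-- `J` generates `X` given `C`: `J` disintegrates `C` and `X` is determined
by the coordinates in `J` on `C`. -/
def Generates {I : Type*} {Ω : I → Type*} {V : Type*} (J : Set I)
    (X : (∀ i, Ω i) → V) (C : Set (∀ i, Ω i)) : Prop :=
  Disintegrates J C ∧ ∀ ω ∈ C, ∀ ω' ∈ C, (∀ j ∈ J, ω j = ω' j) → X ω = X ω'

/-- The history of `X` given `C`: the intersection of all generating sets. -/
def history {I : Type*} {Ω : I → Type*} {V : Type*}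
    (X : (∀ i, Ω i) → V) (C : Set (∀ i, Ω i)) : Set I :=
  ⋂₀ {J | Generates J X C}

/-- The history of an event `A` given `C` is the history of its indicator. -/
def historyE {I : Type*} {Ω : I → Type*} (A C : Set (∀ i, Ω i)) : Set I :=
  history (fun ω => (ω ∈ A)) C

open Classical in
lemma disintegrates_iff_mix {I : Type*} {Ω : I → Type*} (J : Set I) (C : Set (∀ i, Ω i)) :
    Disintegrates J C ↔ ∀ a ∈ C, ∀ b ∈ C, (fun i => if i ∈ J then a i else b i) ∈ C := by
  constructor
  · intro h a ha b hb
    rw [h]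
    refine ⟨⟨a, ha, fun j hj => if_pos hj⟩, ⟨b, hb, fun j hj => if_neg hj⟩⟩
  · intro h
    ext ω
    constructor
    · intro hω
      exact ⟨⟨ω, hω, fun _ _ => rfl⟩, ⟨ω, hω, fun _ _ => rfl⟩⟩
    · rintro ⟨⟨c, hc, h1⟩, ⟨c', hc', h2⟩⟩
      have : ω = fun i => if i ∈ J then c i else c' i := by
        funext i
        by_cases hi : i ∈ J
        · rw [if_pos hi]; exact h1 i hi
        · rw [if_neg hi]; exact h2 i hi
      rw [this]
      exact h c hc c' hc'

theorem disintegrates_inter_union {I : Type*} [Fintype I] {Ω : I → Type*}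
    [∀ i, Fintype (Ω i)] [∀ i, Nonempty (Ω i)]
    (J K : Set I) (C : Set (∀ i, Ω i))
    (hJ : Disintegrates J C) (hK : Disintegrates K C) :
    Disintegrates (J ∩ K) C ∧ Disintegrates (J ∪ K) C := by
  classical
  rw [disintegrates_iff_mix] at hJ hK ⊢
  rw [disintegrates_iff_mix]
  constructor
  · intro a ha b hb
    have h1 := hJ a ha b hb
    have h2 := hK _ h1 b hb
    convert h2 using 1
    funext i
    by_cases hiJ : i ∈ J <;> by_cases hiK : i ∈ K <;>
      simp [hiJ, hiK]
  · intro a ha b hb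
    have h1 := hK a ha b hb
    have h2 := hJ a ha _ h1
    convert h2 using 1
    funext i
    by_cases hiJ : i ∈ J <;> by_cases hiK : i ∈ K <;>
      simp [hiJ, hiK]
end

section
/- If J and K both generate a random variable X given an event C in a factored space, then J ∩ K generates X given C. -/
theorem generates_inter {I : Type*} [Fintype I] {Ω : I → Type*}
    [∀ i, Fintype (Ω i)] [∀ i, Nonempty (Ω i)] {V : Type*}
    (J K : Set I) (X : (∀ i, Ω i) → V) (C : Set (∀ i, Ω i))
    (hJ : Generates J X C) (hK : Generates K X C) :
    Generates (J ∩ K) X C := by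
  classical
  -- splice lemma: the combination of two elements of C along a disintegrating set is in C
  have splice : ∀ (L : Set I), Disintegrates L C → ∀ a ∈ C, ∀ b ∈ C,
      (fun j => if j ∈ L then a j else b j) ∈ C := by
    intro L hL a ha b hb
    rw [hL]
    refine ⟨⟨a, ha, fun j hj => by simp [hj]⟩, ⟨b, hb, fun j hj => by simp [hj]⟩⟩
  constructor
  · -- Disintegrates (J ∩ K) C
    apply Set.eq_of_subset_of_subset
    · intro ω hω
      exact ⟨⟨ω, hω, fun _ _ => rfl⟩, ⟨ω, hω, fun _ _ => rfl⟩⟩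
    · rintro ω ⟨⟨c, hc, hc1⟩, ⟨c', hc', hc2⟩⟩
      have hd : (fun j => if j ∈ K then c j else c' j) ∈ C := splice K hK.1 c hc c' hc'
      have he : (fun j => if j ∈ J then (if j ∈ K then c j else c' j) else c' j) ∈ C :=
        splice J hJ.1 _ hd c' hc'
      have : ω = fun j => if j ∈ J then (if j ∈ K then c j else c' j) else c' j := by
        funext j
        by_cases hj : j ∈ J
        · by_cases hk : j ∈ K
          · simp [hj, hk, hc1 j ⟨hj, hk⟩]
          · simp [hj, hk, hc2 j (fun h => hk h.2)]
        · simp [hj, hc2 j (fun h => hj h.1)]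
      rw [this]; exact he
  · -- determination
    intro ω hω ω' hω' hagree
    have hm : (fun j => if j ∈ K then ω j else ω' j) ∈ C := splice K hK.1 ω hω ω' hω'
    have h1 : X (fun j => if j ∈ K then ω j else ω' j) = X ω := by
      apply hK.2 _ hm _ hω
      intro j hj; simp [hj]
    have h2 : X (fun j => if j ∈ K then ω j else ω' j) = X ω' := by
      apply hJ.2 _ hm _ hω'
      intro j hj
      by_cases hk : j ∈ K
      · simp [hk, hagree j ⟨hj, hk⟩]
      · simp [hk]
    rw [← h1, h2]
end

section
/- For a function X on a factored space and an event C, the history h(X|C), defined as the intersection of all subsets J ⊆ I that generate X given C, itself generates X given C; consequently it is the unique minimal generating set. -/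
theorem Generates.inter {I : Type*} {Ω : I → Type*} {V : Type*} {J K : Set I}
    {X : (∀ i, Ω i) → V} {C : Set (∀ i, Ω i)}
    (hJ : Generates J X C) (hK : Generates K X C) : Generates (J ∩ K) X C := by
  classical
  obtain ⟨hJd, hJx⟩ := hJ
  obtain ⟨hKd, hKx⟩ := hK
  constructor
  · ext ω
    constructor
    · intro hω
      exact ⟨⟨ω, hω, fun _ _ => rfl⟩, ⟨ω, hω, fun _ _ => rfl⟩⟩
    · rintro ⟨⟨c₁, hc₁, h1⟩, ⟨c₂, hc₂, h2⟩⟩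
      have ha : (fun i => if i ∈ K then c₁ i else c₂ i) ∈ C := by
        rw [hKd]
        exact ⟨⟨c₁, hc₁, fun j hj => if_pos hj⟩, ⟨c₂, hc₂, fun j hj => if_neg hj⟩⟩
      rw [hJd]
      refine ⟨⟨_, ha, fun j hj => ?_⟩, ⟨c₂, hc₂, fun j hj => h2 j (fun h => hj h.1)⟩⟩
      by_cases hk : j ∈ K
      · simp only [hk, if_pos]
        exact h1 j ⟨hj, hk⟩
      · simp only [hk, if_neg, if_false]
        exact h2 j (fun h => hk h.2)
  · intro ω hω ω' hω' hagree
    have hσ : (fun i => if i ∈ J then ω i else ω' i) ∈ C := by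
      rw [hJd]
      exact ⟨⟨ω, hω, fun j hj => if_pos hj⟩, ⟨ω', hω', fun j hj => if_neg hj⟩⟩
    have h1 : X ω = X (fun i => if i ∈ J then ω i else ω' i) :=
      hJx ω hω _ hσ (fun j hj => (if_pos hj).symm)
    have h2 : X (fun i => if i ∈ J then ω i else ω' i) = X ω' := by
      refine hKx _ hσ ω' hω' (fun j hj => ?_)
      by_cases hjJ : j ∈ J
      · simp only [hjJ, if_pos]
        exact hagree j ⟨hjJ, hj⟩
      · simp only [hjJ, if_neg, if_false]
    exact h1.trans h2

theorem Generates.univ {I : Type*} {Ω : I → Type*} {V : Type*}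
    {X : (∀ i, Ω i) → V} {C : Set (∀ i, Ω i)} : Generates Set.univ X C := by
  constructor
  · ext ω
    constructor
    · intro h
      exact ⟨⟨ω, h, fun _ _ => rfl⟩, ⟨ω, h, fun _ _ => rfl⟩⟩
    · rintro ⟨⟨c, hc, h1⟩, -⟩
      have : ω = c := funext fun j => h1 j (Set.mem_univ j)
      rwa [this]
  · intro ω hω ω' hω' h
    have : ω = ω' := funext fun j => h j (Set.mem_univ j)
    rw [this]

theorem history_generates_and_minimal {I : Type*} [Fintype I] {Ω : I → Type*}
    [∀ i, Fintype (Ω i)] [∀ i, Nonempty (Ω i)] {V : Type*}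
    (X : (∀ i, Ω i) → V) (C : Set (∀ i, Ω i)) :
    Generates (history X C) X C ∧
      ∀ J : Set I, Generates J X C → history X C ⊆ J := by
  have key : ∀ S : Set (Set I), S.Finite →
      (∀ J ∈ S, Generates J X C) → Generates (⋂₀ S) X C := by
    intro S hS
    refine Set.Finite.induction_on S hS (motive := fun S _ => (∀ J ∈ S, Generates J X C) → Generates (⋂₀ S) X C)
      ?_ ?_
    · intro _
      rw [Set.sInter_empty]
      exact Generates.univ
    · intro a s _ _ ih h
      rw [Set.sInter_insert]
      exact (h _ (Set.mem_insert _ _)).inter (ih fun J hJ => h J (Set.mem_insert_of_mem _ hJ))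
  refine ⟨key _ (Set.toFinite _) fun J hJ => hJ, fun J hJ => Set.sInter_subset_of_mem hJ⟩
end

section
/- For any two functions X, Y on a factored space and any event C, the history of the joint variable (X,Y) given C equals the union of the histories: h((X,Y)|C) = h(X|C) ∪ h(Y|C). -/
section Aux

open Classical

variable {I : Type*} {Ω : I → Type*} {V W : Type*}

lemma disint_inter {J K : Set I} {C : Set (∀ i, Ω i)}
    (hJ : Disintegrates J C) (hK : Disintegrates K C) :
    Disintegrates (J ∩ K) C := by
  apply Set.Subset.antisymm
  · intro ω hω
    exact ⟨⟨ω, hω, fun _ _ => rfl⟩, ⟨ω, hω, fun _ _ => rfl⟩⟩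
  · rintro ω ⟨⟨a, ha, hωa⟩, ⟨b, hb, hωb⟩⟩
    set d : ∀ i, Ω i := fun j => if j ∈ J then a j else b j with hd
    have hdC : d ∈ C := by
      rw [hJ]
      exact ⟨⟨a, ha, fun j hj => if_pos hj⟩, ⟨b, hb, fun j hj => if_neg hj⟩⟩
    rw [hK]
    refine ⟨⟨d, hdC, ?_⟩, ⟨b, hb, ?_⟩⟩
    · intro j hj
      by_cases hjJ : j ∈ J
      · simp only [hd, if_pos hjJ]
        exact hωa j ⟨hjJ, hj⟩
      · simp only [hd, if_neg hjJ]
        exact hωb j (fun h => hjJ h.1)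
    · intro j hj
      exact hωb j (fun h => hj h.2)

lemma disint_union {J K : Set I} {C : Set (∀ i, Ω i)}
    (hJ : Disintegrates J C) (hK : Disintegrates K C) :
    Disintegrates (J ∪ K) C := by
  apply Set.Subset.antisymm
  · intro ω hω
    exact ⟨⟨ω, hω, fun _ _ => rfl⟩, ⟨ω, hω, fun _ _ => rfl⟩⟩
  · rintro ω ⟨⟨a, ha, hωa⟩, ⟨b, hb, hωb⟩⟩
    set e : ∀ i, Ω i := fun j => if j ∈ J then a j else b j with he
    have heC : e ∈ C := by
      rw [hJ]
      exact ⟨⟨a, ha, fun j hj => if_pos hj⟩, ⟨b, hb, fun j hj => if_neg hj⟩⟩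
    rw [hK]
    refine ⟨⟨a, ha, fun j hj => hωa j (Or.inr hj)⟩, ⟨e, heC, ?_⟩⟩
    intro j hj
    by_cases hjJ : j ∈ J
    · simp only [he, if_pos hjJ]
      exact hωa j (Or.inl hjJ)
    · simp only [he, if_neg hjJ]
      exact hωb j (fun h => h.elim hjJ hj)

lemma gen_inter {J K : Set I} {X : (∀ i, Ω i) → V} {C : Set (∀ i, Ω i)}
    (hJ : Generates J X C) (hK : Generates K X C) :
    Generates (J ∩ K) X C := by
  refine ⟨disint_inter hJ.1 hK.1, ?_⟩
  intro ω hω ω' hω' hagree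
  set d : ∀ i, Ω i := fun j => if j ∈ J then ω j else ω' j with hd
  have hdC : d ∈ C := by
    rw [hJ.1]
    exact ⟨⟨ω, hω, fun j hj => if_pos hj⟩, ⟨ω', hω', fun j hj => if_neg hj⟩⟩
  have h1 : X ω = X d := hJ.2 ω hω d hdC (fun j hj => (if_pos hj).symm)
  have h2 : X d = X ω' := by
    apply hK.2 d hdC ω' hω'
    intro j hj
    by_cases hjJ : j ∈ J
    · simp only [hd, if_pos hjJ]
      exact hagree j ⟨hjJ, hj⟩
    · simp only [hd, if_neg hjJ]
  exact h1.trans h2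

lemma gen_univ {X : (∀ i, Ω i) → V} {C : Set (∀ i, Ω i)} :
    Generates Set.univ X C := by
  constructor
  · apply Set.Subset.antisymm
    · intro ω hω
      exact ⟨⟨ω, hω, fun _ _ => rfl⟩, ⟨ω, hω, fun _ _ => rfl⟩⟩
    · rintro ω ⟨⟨a, ha, hωa⟩, _⟩
      have : ω = a := funext fun j => hωa j (Set.mem_univ j)
      rwa [this]
  · intro ω hω ω' hω' hagree
    have : ω = ω' := funext fun j => hagree j (Set.mem_univ j)
    rw [this]

lemma gen_sInter [Finite I] {X : (∀ i, Ω i) → V} {C : Set (∀ i, Ω i)}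
    {S : Set (Set I)} (hS : ∀ J ∈ S, Generates J X C) :
    Generates (⋂₀ S) X C := by
  have hfin : S.Finite := Set.toFinite S
  refine Set.Finite.induction_on S hfin
    (motive := fun T _ => (∀ J ∈ T, Generates J X C) → Generates (⋂₀ T) X C)
    (fun _ => by simpa using (gen_univ : Generates Set.univ X C)) ?_ hS
  intro J T _ _ ih hJT
  rw [Set.sInter_insert]
  exact gen_inter (hJT J (Set.mem_insert J T))
    (ih (fun K hK => hJT K (Set.mem_insert_of_mem J hK)))

lemma history_generates [Finite I] (X : (∀ i, Ω i) → V) (C : Set (∀ i, Ω i)) :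
    Generates (history X C) X C :=
  gen_sInter (fun _ hJ => hJ)

end Aux

theorem history_joint {I : Type*} [Fintype I] {Ω : I → Type*}
    [∀ i, Fintype (Ω i)] [∀ i, Nonempty (Ω i)] {V W : Type*}
    (X : (∀ i, Ω i) → V) (Y : (∀ i, Ω i) → W) (C : Set (∀ i, Ω i)) :
    history (fun ω => (X ω, Y ω)) C = history X C ∪ history Y C := by
  apply Set.Subset.antisymm
  · apply Set.sInter_subset_of_mem
    refine ⟨disint_union (history_generates X C).1 (history_generates Y C).1, ?_⟩
    intro ω hω ω' hω' hagree
    have hx := (history_generates X C).2 ω hω ω' hω' (fun j hj => hagree j (Or.inl hj))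
    have hy := (history_generates Y C).2 ω hω ω' hω' (fun j hj => hagree j (Or.inr hj))
    simp [hx, hy]
  · apply Set.union_subset
    · apply Set.sInter_subset_sInter
      intro J hJ
      exact ⟨hJ.1, fun ω hω ω' hω' ha => congrArg Prod.fst (hJ.2 ω hω ω' hω' ha)⟩
    · apply Set.sInter_subset_sInter
      intro J hJ
      exact ⟨hJ.1, fun ω hω ω' hω' ha => congrArg Prod.snd (hJ.2 ω hω ω' hω' ha)⟩
end

section
/- Let X and Y be functions on a factored space Ω. Then h(X) ⊆ h(Y) (X is structurally before Y) if and only if for every function Z on Ω, disjointness of h(Y) and h(Z) implies disjointness of h(X) and h(Z). -/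
lemma disintegrates_univ {I : Type*} {Ω : I → Type*} (J : Set I) :
    Disintegrates J (Set.univ : Set (∀ i, Ω i)) := by
  ext ω
  simp only [Set.mem_univ, Set.mem_setOf_eq, true_iff]
  exact ⟨⟨ω, trivial, fun _ _ => rfl⟩, ⟨ω, trivial, fun _ _ => rfl⟩⟩

universe u

theorem structural_time_iff {I : Type*} [Fintype I] {Ω : I → Type*}
    [∀ i, Fintype (Ω i)] [∀ i, Nontrivial (Ω i)] {V W : Type*}
    (X : (∀ i, Ω i) → V) (Y : (∀ i, Ω i) → W) :
    history X Set.univ ⊆ history Y Set.univ ↔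
      ∀ (Z : Type u) (Zf : (∀ i, Ω i) → Z),
        Disjoint (history Y Set.univ) (history Zf Set.univ) →
        Disjoint (history X Set.univ) (history Zf Set.univ) := by
  classical
  constructor
  · intro h Z Zf hd
    exact hd.mono_left h
  · intro H i hiX
    by_contra hiY
    set Zf : (∀ i, Ω i) → ULift.{u} (Fin (Fintype.card (Ω i))) :=
      fun ω => ⟨Fintype.equivFin (Ω i) (ω i)⟩ with hZf
    have gen_i : Generates {i} Zf Set.univ := by
      refine ⟨disintegrates_univ _, fun ω _ ω' _ hag => ?_⟩
      simp only [hZf]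
      rw [hag i rfl]
    have hsub : history Zf Set.univ ⊆ {i} := Set.sInter_subset_of_mem gen_i
    have hiZ : i ∈ history Zf Set.univ := by
      intro J hJ
      by_contra hiJ
      obtain ⟨a, b, hab⟩ := exists_pair_ne (Ω i)
      have hne : ∀ j, Nonempty (Ω j) := fun j => inferInstance
      let ω : ∀ j, Ω j := fun j => Classical.choice (hne j)
      have key := hJ.2 (Function.update ω i a) (Set.mem_univ _)
        (Function.update ω i b) (Set.mem_univ _) (fun j hj => by
          have hji : j ≠ i := fun h => hiJ (h ▸ hj)
          rw [Function.update_of_ne hji, Function.update_of_ne hji])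
      simp only [hZf, Function.update_self, ULift.ext_iff] at key
      exact hab ((Fintype.equivFin (Ω i)).injective key)
    have hdYZ : Disjoint (history Y Set.univ) (history Zf Set.univ) := by
      rw [Set.disjoint_left]
      intro j hjY hjZ
      have : j = i := hsub hjZ
      exact hiY (this ▸ hjY)
    exact Set.disjoint_left.mp (H _ Zf hdYZ) hiX hiZ
end

section
/- Completeness for events: let A, B, C be events in a factored space Ω. If P(A ∩ C)·P(B ∩ C) = P(A ∩ B ∩ C)·P(C) holds for every distribution P that factorizes over Ω, then h(A|C) ∩ h(B|C) = ∅. -/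
/-- A probability distribution on a finite type. -/
def IsDist {α : Type*} [Fintype α] (P : α → ℝ) : Prop :=
  (∀ a, 0 ≤ P a) ∧ ∑ a, P a = 1

/-- The probability of an event `A` under `P`. -/
noncomputable def pr {α : Type*} [Fintype α] (P : α → ℝ) (A : Set α) : ℝ :=
  ∑ a, A.indicator P a

/-- `P` factorizes over the factored space `∀ i, Ω i`. -/
def Factorizes {I : Type*} [Fintype I] [DecidableEq I] {Ω : I → Type*}
    [∀ i, Fintype (Ω i)] (P : (∀ i, Ω i) → ℝ) : Prop :=
  ∃ p : ∀ i, Ω i → ℝ, (∀ i, IsDist (p i)) ∧ ∀ ω, P ω = ∏ i, p i (ω i)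

set_option linter.unusedSectionVars false

attribute [local instance] Classical.propDecidable

set_option linter.unusedSectionVars false
namespace FFS

variable {I : Type*} {Ω : I → Type*}

/-- mix: coordinates in `E` from `x`, the rest from `y`. -/
noncomputable def mixS (E : Set I) (x y : ∀ i, Ω i) : ∀ i, Ω i :=
  fun i => if i ∈ E then x i else y i

theorem mixS_mem_left {E : Set I} {x y : ∀ i, Ω i} {i : I} (hi : i ∈ E) :
    mixS E x y i = x i := by simp [mixS, hi]

theorem mixS_mem_right {E : Set I} {x y : ∀ i, Ω i} {i : I} (hi : i ∉ E) :
    mixS E x y i = y i := by simp [mixS, hi]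

/-- Disintegration in terms of mixes. -/
theorem dis_iff_mix {E : Set I} {C : Set (∀ i, Ω i)} :
    Disintegrates E C ↔ ∀ x ∈ C, ∀ y ∈ C, mixS E x y ∈ C := by
  constructor
  · intro hd x hx y hy
    rw [hd]
    refine ⟨⟨x, hx, fun j hj => mixS_mem_left hj⟩, ⟨y, hy, fun j hj => mixS_mem_right hj⟩⟩
  · intro hmix
    apply Set.Subset.antisymm
    · intro ω hω
      exact ⟨⟨ω, hω, fun j _ => rfl⟩, ⟨ω, hω, fun j _ => rfl⟩⟩
    · rintro ω ⟨⟨c, hc, hcj⟩, ⟨c', hc', hcj'⟩⟩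
      have : ω = mixS E c c' := by
        funext i
        by_cases hi : i ∈ E
        · rw [mixS_mem_left hi]; exact hcj i hi
        · rw [mixS_mem_right hi]; exact hcj' i hi
      rw [this]; exact hmix c hc c' hc'

theorem dis_empty {C : Set (∀ i, Ω i)} : Disintegrates (∅ : Set I) C := by
  rw [dis_iff_mix]
  intro x hx y hy
  have : mixS (∅ : Set I) x y = y := by
    funext i; exact mixS_mem_right (by simp)
  rwa [this]

theorem dis_univ {C : Set (∀ i, Ω i)} : Disintegrates (Set.univ : Set I) C := by
  rw [dis_iff_mix]
  intro x hx y hy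
  have : mixS (Set.univ : Set I) x y = x := by
    funext i; exact mixS_mem_left (by simp)
  rwa [this]

theorem dis_compl {E : Set I} {C : Set (∀ i, Ω i)} (h : Disintegrates E C) :
    Disintegrates Eᶜ C := by
  rw [dis_iff_mix] at h ⊢
  intro x hx y hy
  have : mixS Eᶜ x y = mixS E y x := by
    funext i
    by_cases hi : i ∈ E
    · rw [mixS_mem_right (by simpa using hi), mixS_mem_left hi]
    · rw [mixS_mem_left (by simpa using hi), mixS_mem_right hi]
  rw [this]; exact h y hy x hx

theorem dis_inter {E F : Set I} {C : Set (∀ i, Ω i)} (hE : Disintegrates E C)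
    (hF : Disintegrates F C) : Disintegrates (E ∩ F) C := by
  rw [dis_iff_mix] at hE hF ⊢
  intro x hx y hy
  have key : mixS (E ∩ F) x y = mixS E (mixS F x y) y := by
    funext i
    by_cases hiE : i ∈ E
    · rw [mixS_mem_left hiE]
      by_cases hiF : i ∈ F
      · rw [mixS_mem_left (Set.mem_inter hiE hiF), mixS_mem_left hiF]
      · rw [mixS_mem_right (fun hmem => hiF hmem.2), mixS_mem_right hiF]
    · rw [mixS_mem_right hiE, mixS_mem_right (fun hmem => hiE hmem.1)]
  rw [key]
  exact hE _ (hF x hx y hy) y hy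

theorem dis_union {E F : Set I} {C : Set (∀ i, Ω i)} (hE : Disintegrates E C)
    (hF : Disintegrates F C) : Disintegrates (E ∪ F) C := by
  have := dis_inter (dis_compl hE) (dis_compl hF)
  have h2 := dis_compl this
  rwa [Set.compl_inter, compl_compl, compl_compl] at h2

theorem dis_sInter [Finite I] {𝒮 : Set (Set I)} {C : Set (∀ i, Ω i)}
    (h : ∀ F ∈ 𝒮, Disintegrates F C) : Disintegrates (⋂₀ 𝒮) C := by
  have key : ∀ (s : Finset (Set I)), (∀ F ∈ s, Disintegrates F C) →
      Disintegrates (⋂ F ∈ s, F) C := by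
    intro s
    induction s using Finset.induction_on with
    | empty => intro _; simpa using (dis_univ : Disintegrates (Set.univ : Set I) C)
    | @insert F s' hF ih =>
      intro h'
      rw [Finset.set_biInter_insert]
      exact dis_inter (h' _ (Finset.mem_insert_self _ _))
        (ih fun F' hF' => h' F' (Finset.mem_insert_of_mem hF'))
  have hfin : 𝒮.Finite := Set.toFinite _
  have h2 := key hfin.toFinset (fun F hF => h F (hfin.mem_toFinset.1 hF))
  have : (⋂ F ∈ hfin.toFinset, F) = ⋂₀ 𝒮 := by
    ext x; simp [Set.mem_sInter, Set.Finite.mem_toFinset]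
  rwa [this] at h2


section Atoms

variable [Finite I] (C : Set (∀ i, Ω i))

/-- The atom of the Boolean algebra of disintegrating sets containing `i`. -/
noncomputable def atomOf (i : I) : Set I := ⋂₀ {F | Disintegrates F C ∧ i ∈ F}

theorem dis_atomOf (i : I) : Disintegrates (atomOf C i) C :=
  dis_sInter (fun _ hF => hF.1)

theorem mem_atomOf (i : I) : i ∈ atomOf C i := by
  intro F hF; exact hF.2

theorem atomOf_subset {F : Set I} (hF : Disintegrates F C) {i : I} (hi : i ∈ F) :
    atomOf C i ⊆ F :=
  Set.sInter_subset_of_mem ⟨hF, hi⟩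

theorem mem_atomOf_symm {i j : I} (hj : j ∈ atomOf C i) : i ∈ atomOf C j := by
  intro F hF
  by_contra hiF
  have h1 : i ∈ Fᶜ := hiF
  have h2 : j ∈ Fᶜ := atomOf_subset C (dis_compl hF.1) h1 hj
  exact h2 hF.2

theorem atomOf_eq_of_mem {i j : I} (hj : j ∈ atomOf C i) : atomOf C j = atomOf C i := by
  apply Set.Subset.antisymm
  · apply Set.subset_sInter
    rintro F ⟨hF, hiF⟩
    exact atomOf_subset C hF (hj F ⟨hF, hiF⟩)
  · apply Set.subset_sInter
    rintro F ⟨hF, hjF⟩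
    exact atomOf_subset C hF (mem_atomOf_symm C hj F ⟨hF, hjF⟩)

/-- The event `A` does not depend on the coordinates in the atom of `i` (on `C`). -/
def FreeAt (A : Set (∀ i, Ω i)) (i : I) : Prop :=
  ∀ ω ∈ C, ∀ ω' ∈ C, (∀ j, j ∉ atomOf C i → ω j = ω' j) → (ω ∈ A ↔ ω' ∈ A)

theorem freeAt_of_atom_eq {A : Set (∀ i, Ω i)} {i j : I}
    (hatom : atomOf C j = atomOf C i) (h : FreeAt C A i) : FreeAt C A j := by
  intro ω hω ω' hω' hagree
  exact h ω hω ω' hω' (fun k hk => hagree k (by rwa [hatom]))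

theorem dis_biUnion {s : Finset I} {f : I → Set I} {C : Set (∀ i, Ω i)}
    (h : ∀ i ∈ s, Disintegrates (f i) C) : Disintegrates (⋃ i ∈ s, f i) C := by
  classical
  induction s using Finset.induction_on with
  | empty => simpa using (dis_empty : Disintegrates (∅ : Set I) C)
  | @insert a s' ha ih =>
    rw [Finset.set_biUnion_insert]
    exact dis_union (h a (Finset.mem_insert_self _ _))
      (ih fun i hi => h i (Finset.mem_insert_of_mem hi))

end Atoms

section Walk

variable [Fintype I] (C : Set (∀ i, Ω i))

theorem det_of_free (A : Set (∀ i, Ω i)) :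
    ∀ (n : ℕ) (ω ω' : ∀ i, Ω i), ω ∈ C → ω' ∈ C →
      (Finset.univ.filter (fun i => ω i ≠ ω' i)).card ≤ n →
      (∀ j, ¬ FreeAt C A j → ω j = ω' j) → (ω ∈ A ↔ ω' ∈ A) := by
  intro n
  induction n with
  | zero =>
    intro ω ω' hω hω' hcard _
    have : ω = ω' := by
      funext i
      by_contra hne
      have : i ∈ Finset.univ.filter (fun i => ω i ≠ ω' i) := by
        simp [hne]
      have := Finset.card_pos.2 ⟨i, this⟩
      omega
    rw [this]
  | succ n ih =>
    intro ω ω' hω hω' hcard hagree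
    by_cases heq : ω = ω'
    · rw [heq]
    · have hex : ∃ i, ω i ≠ ω' i := by
        by_contra hno
        push_neg at hno
        exact heq (funext hno)
      obtain ⟨i, hi⟩ := hex
      have hfree : FreeAt C A i := by
        by_contra hnf
        exact hi (hagree i hnf)
      set E := atomOf C i with hE
      set ω'' := mixS E ω' ω with hω''def
      have hω''C : ω'' ∈ C := (dis_iff_mix.1 (dis_atomOf C i)) ω' hω' ω hω
      have step1 : ω ∈ A ↔ ω'' ∈ A := by
        apply hfree ω hω ω'' hω''C
        intro j hj
        rw [hω''def, mixS_mem_right hj]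
      have hsub : (Finset.univ.filter (fun j => ω'' j ≠ ω' j)) ⊆
          (Finset.univ.filter (fun j => ω j ≠ ω' j)).erase i := by
        intro j hj
        simp only [Finset.mem_filter, Finset.mem_univ, true_and] at hj
        have hjE : j ∉ E := by
          intro hjE
          exact hj (by rw [hω''def, mixS_mem_left hjE])
        have : ω'' j = ω j := by rw [hω''def, mixS_mem_right hjE]
        rw [this] at hj
        refine Finset.mem_erase.2 ⟨?_, by simp [hj]⟩
        intro hji; rw [hji] at hjE; exact hjE (mem_atomOf C i)
      have hcard' : (Finset.univ.filter (fun j => ω'' j ≠ ω' j)).card ≤ n := by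
        have h1 := Finset.card_le_card hsub
        have hi_mem : i ∈ Finset.univ.filter (fun j => ω j ≠ ω' j) := by simp [hi]
        have h2 := Finset.card_erase_of_mem hi_mem
        omega
      have step2 : ω'' ∈ A ↔ ω' ∈ A := by
        apply ih ω'' ω' hω''C hω' hcard'
        intro j hnf
        by_cases hjE : j ∈ E
        · exact absurd (freeAt_of_atom_eq C (atomOf_eq_of_mem C hjE) hfree) hnf
        · rw [hω''def, mixS_mem_right hjE]; exact hagree j hnf
      exact step1.trans step2
    
theorem gen_of_free (A : Set (∀ i, Ω i)) :
    Generates {i | ¬ FreeAt C A i} (fun ω => ω ∈ A) C := by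
  constructor
  · have hJ : {i | ¬ FreeAt C A i} = ⋃ i ∈ Finset.univ.filter (fun i => ¬ FreeAt C A i), atomOf C i := by
      apply Set.Subset.antisymm
      · intro i hi
        exact Set.mem_biUnion (Finset.mem_filter.2 ⟨Finset.mem_univ _, hi⟩) (mem_atomOf C i)
      · intro j hj
        obtain ⟨i, hi, hji⟩ := Set.mem_iUnion₂.1 hj
        simp only [Finset.mem_filter, Finset.mem_univ, true_and] at hi
        intro hfj
        exact hi (freeAt_of_atom_eq C (atomOf_eq_of_mem C hji).symm hfj)
    rw [hJ]
    exact dis_biUnion (fun i _ => dis_atomOf C i)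
  · intro ω hω ω' hω' hagree
    have := det_of_free C A (Finset.univ.filter (fun i => ω i ≠ ω' i)).card ω ω' hω hω'
      le_rfl (fun j hnf => hagree j hnf)
    exact eq_iff_iff.2 this

end Walk


section Poly

open MvPolynomial

variable [Fintype I] [DecidableEq I] [∀ i, Fintype (Ω i)] [∀ i, Nonempty (Ω i)]

noncomputable def dflt : ∀ i, Ω i := fun i => (Classical.inhabited_of_nonempty (by infer_instance : Nonempty (Ω i))).default

noncomputable def padS (E : Set I) (ω : ∀ i, Ω i) : ∀ i, Ω i := mixS E ω dflt

noncomputable def projSet (E : Set I) (S : Set (∀ i, Ω i)) : Set (∀ i, Ω i) := padS E '' S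

theorem padS_apply_mem {E : Set I} {ω : ∀ i, Ω i} {i : I} (hi : i ∈ E) :
    padS E ω i = ω i := mixS_mem_left hi

theorem padS_apply_not {E : Set I} {ω : ∀ i, Ω i} {i : I} (hi : i ∉ E) :
    padS E ω i = dflt i := mixS_mem_right hi

theorem padS_eq_of_agree {E : Set I} {ω ω' : ∀ i, Ω i} (h : ∀ i ∈ E, ω i = ω' i) :
    padS E ω = padS E ω' := by
  funext i
  by_cases hi : i ∈ E
  · rw [padS_apply_mem hi, padS_apply_mem hi]; exact h i hi
  · rw [padS_apply_not hi, padS_apply_not hi]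

theorem projSet_univ (S : Set (∀ i, Ω i)) : projSet Set.univ S = S := by
  have h : ∀ ω : ∀ i, Ω i, padS Set.univ ω = ω := by
    intro ω; funext i; exact padS_apply_mem (Set.mem_univ i)
  unfold projSet
  ext ω
  constructor
  · rintro ⟨x, hx, rfl⟩; rwa [h]
  · intro hω; exact ⟨ω, hω, h ω⟩

theorem canonical_of_mem_projSet {E : Set I} {S : Set (∀ i, Ω i)} {u : ∀ i, Ω i}
    (hu : u ∈ projSet E S) {i : I} (hi : i ∉ E) : u i = dflt i := by
  obtain ⟨ω, _, rfl⟩ := hu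
  exact padS_apply_not hi

theorem padS_mem_projSet {E : Set I} {S : Set (∀ i, Ω i)} {ω : ∀ i, Ω i} (hω : ω ∈ S) :
    padS E ω ∈ projSet E S := Set.mem_image_of_mem _ hω

theorem padS_of_canonical {E : Set I} {S : Set (∀ i, Ω i)} {u : ∀ i, Ω i}
    (hu : u ∈ projSet E S) : padS E u = u := by
  funext i
  by_cases hi : i ∈ E
  · exact padS_apply_mem hi
  · rw [padS_apply_not hi, canonical_of_mem_projSet hu hi]

/-- The multilinear monomial of `ω` on coordinates in `E`. -/
noncomputable def monOn (E : Set I) (ω : ∀ i, Ω i) : MvPolynomial ((i : I) × Ω i) ℝ :=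
  ∏ i, if i ∈ E then X ⟨i, ω i⟩ else 1

theorem monOn_congr {E : Set I} {ω ω' : ∀ i, Ω i} (h : ∀ i ∈ E, ω i = ω' i) :
    monOn E ω = monOn E ω' := by
  apply Finset.prod_congr rfl
  intro i _
  by_cases hi : i ∈ E
  · simp only [if_pos hi, h i hi]
  · simp only [if_neg hi]

theorem monOn_univ_split (E : Set I) (ω : ∀ i, Ω i) :
    monOn Set.univ ω = monOn E ω * monOn Eᶜ ω := by
  unfold monOn
  rw [← Finset.prod_mul_distrib]
  apply Finset.prod_congr rfl
  intro i _
  by_cases hi : i ∈ E <;> simp [hi]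

/-- The indicator polynomial of the projection of `S` to coordinates `E`. -/
noncomputable def PhiOn (E : Set I) (S : Set (∀ i, Ω i)) : MvPolynomial ((i : I) × Ω i) ℝ :=
  ∑ ω ∈ (Set.toFinite (projSet E S)).toFinset, monOn E ω

theorem eval_monOn (v : ((i : I) × Ω i) → ℝ) (E : Set I) (ω : ∀ i, Ω i) :
    eval v (monOn E ω) = ∏ i, if i ∈ E then v ⟨i, ω i⟩ else 1 := by
  unfold monOn
  rw [map_prod]
  apply Finset.prod_congr rfl
  intro i _
  by_cases hi : i ∈ E <;> simp [hi]

theorem eval_PhiOn (v : ((i : I) × Ω i) → ℝ) (E : Set I) (S : Set (∀ i, Ω i)) :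
    eval v (PhiOn E S) =
      ∑ ω ∈ (Set.toFinite (projSet E S)).toFinset, ∏ i, if i ∈ E then v ⟨i, ω i⟩ else 1 := by
  unfold PhiOn
  rw [map_sum]
  exact Finset.sum_congr rfl (fun ω _ => eval_monOn v E ω)

/-- Factorization of the indicator polynomial along a disintegration. -/
theorem PhiOn_mul_of_dis {E : Set I} {C : Set (∀ i, Ω i)} (hd : Disintegrates E C) :
    PhiOn Set.univ C = PhiOn E C * PhiOn Eᶜ C := by
  unfold PhiOn
  rw [Finset.sum_mul_sum, ← Finset.sum_product']
  refine Finset.sum_nbij' (fun ω => (padS E ω, padS Eᶜ ω)) (fun p => mixS E p.1 p.2)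
    ?_ ?_ ?_ ?_ ?_
  · intro ω hω
    simp only [Set.Finite.mem_toFinset] at hω
    rw [projSet_univ] at hω
    simp only [Finset.mem_product, Set.Finite.mem_toFinset]
    exact ⟨padS_mem_projSet hω, padS_mem_projSet hω⟩
  · rintro ⟨u, w⟩ hp
    simp only [Finset.mem_product, Set.Finite.mem_toFinset] at hp
    simp only [Set.Finite.mem_toFinset]
    rw [projSet_univ]
    obtain ⟨c, hc, hc'⟩ := hp.1
    obtain ⟨c2, hc2, hc2'⟩ := hp.2
    have hmix : mixS E u w = mixS E c c2 := by
      funext i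
      by_cases hi : i ∈ E
      · rw [mixS_mem_left hi, mixS_mem_left hi, ← hc', padS_apply_mem hi]
      · rw [mixS_mem_right hi, mixS_mem_right hi, ← hc2',
          padS_apply_mem (show i ∈ Eᶜ from hi)]
    show mixS E u w ∈ C
    rw [hmix]
    exact (dis_iff_mix.1 hd) c hc c2 hc2
  · intro ω hω
    simp only [Set.Finite.mem_toFinset] at hω
    rw [projSet_univ] at hω
    show mixS E (padS E ω) (padS Eᶜ ω) = ω
    funext i
    by_cases hi : i ∈ E
    · rw [mixS_mem_left hi, padS_apply_mem hi]
    · rw [mixS_mem_right hi, padS_apply_mem (show i ∈ Eᶜ from hi)]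
  · rintro ⟨u, w⟩ hp
    simp only [Finset.mem_product, Set.Finite.mem_toFinset] at hp
    show (padS E (mixS E u w), padS Eᶜ (mixS E u w)) = (u, w)
    have h1 : padS E (mixS E u w) = u := by
      funext i
      by_cases hi : i ∈ E
      · rw [padS_apply_mem hi, mixS_mem_left hi]
      · rw [padS_apply_not hi, canonical_of_mem_projSet hp.1 hi]
    have h2 : padS Eᶜ (mixS E u w) = w := by
      funext i
      by_cases hi : i ∈ E
      · rw [padS_apply_not (show ¬ i ∈ Eᶜ by simpa using hi),
          canonical_of_mem_projSet hp.2 (show i ∉ Eᶜ by simpa using hi)]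
      · rw [padS_apply_mem (show i ∈ Eᶜ from hi), mixS_mem_right hi]
    rw [h1, h2]
  · intro ω hω
    simp only [Set.Finite.mem_toFinset] at hω
    rw [projSet_univ] at hω
    show monOn Set.univ ω = monOn E (padS E ω) * monOn Eᶜ (padS Eᶜ ω)
    rw [monOn_univ_split E ω]
    congr 1
    · exact monOn_congr (fun i hi => (padS_apply_mem hi).symm)
    · exact monOn_congr (fun i hi => (padS_apply_mem hi).symm)

end Poly


section Identity

open MvPolynomial

variable [Fintype I] [DecidableEq I] [∀ i, Fintype (Ω i)] [∀ i, Nonempty (Ω i)]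

noncomputable def Wt (v : ((i : I) × Ω i) → ℝ) (S : Set (∀ i, Ω i)) : ℝ :=
  eval v (PhiOn Set.univ S)

theorem Wt_eq_sum (v : ((i : I) × Ω i) → ℝ) (S : Set (∀ i, Ω i)) :
    Wt v S = ∑ ω ∈ (Set.toFinite S).toFinset, ∏ i, v ⟨i, ω i⟩ := by
  unfold Wt
  rw [eval_PhiOn]
  have hfs : (Set.toFinite (projSet Set.univ S)).toFinset = (Set.toFinite S).toFinset := by
    ext ω; simp [Set.Finite.mem_toFinset, projSet_univ]
  rw [hfs]
  refine Finset.sum_congr rfl (fun ω _ => Finset.prod_congr rfl (fun i _ => ?_))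
  simp

theorem pr_eq_sum (P : (∀ i, Ω i) → ℝ) (S : Set (∀ i, Ω i)) :
    pr P S = ∑ ω ∈ (Set.toFinite S).toFinset, P ω := by
  unfold pr
  rw [show (∑ a, S.indicator P a) = ∑ a ∈ Finset.univ, if a ∈ S then P a else 0 from
    Finset.sum_congr rfl (fun a _ => Set.indicator_apply S P a)]
  rw [← Finset.sum_filter]
  apply Finset.sum_congr
  · ext ω
    simp only [Finset.mem_filter, Finset.mem_univ, true_and, Set.Finite.mem_toFinset]
  · intros; rfl

theorem Wt_identity_nonneg {A B C : Set (∀ i, Ω i)}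
    (h : ∀ P : (∀ i, Ω i) → ℝ, Factorizes P →
      pr P (A ∩ C) * pr P (B ∩ C) = pr P (A ∩ B ∩ C) * pr P C)
    (v : ((i : I) × Ω i) → ℝ) (hv : ∀ s, 0 ≤ v s) :
    Wt v (A ∩ C) * Wt v (B ∩ C) = Wt v (A ∩ B ∩ C) * Wt v C := by
  by_cases hpos : ∀ i : I, 0 < ∑ x : Ω i, v ⟨i, x⟩
  · set σf : I → ℝ := fun i => ∑ x : Ω i, v ⟨i, x⟩ with hσf
    set p : ∀ i, Ω i → ℝ := fun i x => v ⟨i, x⟩ / σf i with hp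
    set P : (∀ i, Ω i) → ℝ := fun ω => ∏ i, p i (ω i) with hP
    have hfac : Factorizes P := by
      refine ⟨p, fun i => ⟨fun x => div_nonneg (hv _) (le_of_lt (hpos i)), ?_⟩, fun ω => rfl⟩
      rw [← Finset.sum_div]
      exact div_self (ne_of_gt (hpos i))
    have hid := h P hfac
    have hprW : ∀ S : Set (∀ i, Ω i), pr P S = Wt v S * (∏ i, σf i)⁻¹ := by
      intro S
      rw [pr_eq_sum, Wt_eq_sum, Finset.sum_mul]
      apply Finset.sum_congr rfl
      intro ω _
      rw [hP]
      simp only [hp]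
      rw [Finset.prod_div_distrib]
      rw [div_eq_mul_inv]
    have hprod_pos : 0 < ∏ i, σf i := Finset.prod_pos (fun i _ => hpos i)
    rw [hprW, hprW, hprW, hprW] at hid
    have hne : (∏ i, σf i)⁻¹ ≠ 0 := inv_ne_zero (ne_of_gt hprod_pos)
    have hc : ((∏ i, σf i)⁻¹ * (∏ i, σf i)⁻¹) ≠ 0 := mul_ne_zero hne hne
    apply mul_right_cancel₀ hc
    linear_combination hid
  · push_neg at hpos
    obtain ⟨i0, hi0⟩ := hpos
    have hz : ∀ x : Ω i0, v ⟨i0, x⟩ = 0 := by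
      have hsum : ∑ x : Ω i0, v ⟨i0, x⟩ = 0 :=
        le_antisymm hi0 (Finset.sum_nonneg (fun x _ => hv _))
      intro x
      have := (Finset.sum_eq_zero_iff_of_nonneg (fun x _ => hv (⟨i0, x⟩ : (i : I) × Ω i))).1 hsum
      exact this x (Finset.mem_univ x)
    have hWz : ∀ S : Set (∀ i, Ω i), Wt v S = 0 := by
      intro S
      rw [Wt_eq_sum]
      apply Finset.sum_eq_zero
      intro ω _
      exact Finset.prod_eq_zero (Finset.mem_univ i0) (hz (ω i0))
    simp [hWz]

/-- Evaluating the image of a multivariate polynomial under a `Polynomial`-valued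
substitution commutes with evaluating at a point. -/
theorem eval_aeval_line (ℓ : ((i : I) × Ω i) → Polynomial ℝ)
    (F : MvPolynomial ((i : I) × Ω i) ℝ) (t : ℝ) :
    (MvPolynomial.aeval ℓ F).eval t = eval (fun s => (ℓ s).eval t) F := by
  have key : (Polynomial.evalRingHom t).comp (MvPolynomial.aeval ℓ).toRingHom =
      (MvPolynomial.eval (fun s => (ℓ s).eval t)) := by
    apply MvPolynomial.ringHom_ext
    · intro r
      simp
    · intro s
      simp
  exact congrArg (fun f => f F) (congrArg DFunLike.coe key)

theorem phi_identity {A B C : Set (∀ i, Ω i)}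
    (h : ∀ P : (∀ i, Ω i) → ℝ, Factorizes P →
      pr P (A ∩ C) * pr P (B ∩ C) = pr P (A ∩ B ∩ C) * pr P C) :
    PhiOn Set.univ (A ∩ C) * PhiOn Set.univ (B ∩ C) =
      PhiOn Set.univ (A ∩ B ∩ C) * PhiOn Set.univ C := by
  set F : MvPolynomial ((i : I) × Ω i) ℝ :=
    PhiOn Set.univ (A ∩ C) * PhiOn Set.univ (B ∩ C) -
      PhiOn Set.univ (A ∩ B ∩ C) * PhiOn Set.univ C with hF
  have hFzero : ∀ w : ((i : I) × Ω i) → ℝ, eval w F = 0 := by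
    intro w
    set D : ℝ := ∑ s : (i : I) × Ω i, |w s - 1| with hD
    have hD0 : 0 ≤ D := Finset.sum_nonneg (fun s _ => abs_nonneg _)
    set ε : ℝ := (1 + D)⁻¹ with hε
    have hεpos : 0 < ε := inv_pos.2 (by linarith)
    set ℓ : ((i : I) × Ω i) → Polynomial ℝ :=
      fun s => Polynomial.C 1 + Polynomial.C (w s - 1) * Polynomial.X with hℓ
    set Fhat : Polynomial ℝ := MvPolynomial.aeval ℓ F with hFhat
    have heval : ∀ t : ℝ, Fhat.eval t = eval (fun s => 1 + t * (w s - 1)) F := by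
      intro t
      have hpt : (fun s => (ℓ s).eval t) = fun s => 1 + t * (w s - 1) := by
        funext s
        simp [hℓ]
        ring
      rw [hFhat, eval_aeval_line, hpt]
    have hroots : ∀ t ∈ Set.Ioo (-ε) ε, Fhat.IsRoot t := by
      intro t ht
      have habs : |t| < ε := abs_lt.2 ⟨ht.1, ht.2⟩
      have hnn : ∀ s, 0 ≤ 1 + t * (w s - 1) := by
        intro s
        have h1 : |t * (w s - 1)| ≤ |t| * D := by
          rw [abs_mul]
          apply mul_le_mul_of_nonneg_left _ (abs_nonneg t)
          exact Finset.single_le_sum (f := fun s => |w s - 1|) (fun s _ => abs_nonneg _) (Finset.mem_univ s)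
        have h2 : |t| * D < 1 := by
          calc |t| * D ≤ |t| * (1 + D) := by nlinarith [abs_nonneg t]
            _ < ε * (1 + D) := by
                apply mul_lt_mul_of_pos_right habs
                linarith
            _ = 1 := by
                rw [hε]
                field_simp
        have := neg_abs_le (t * (w s - 1))
        have habs2 : |t * (w s - 1)| < 1 := lt_of_le_of_lt h1 h2
        nlinarith [abs_nonneg (t * (w s - 1))]
      unfold Polynomial.IsRoot
      rw [heval t]
      have := Wt_identity_nonneg h (fun s => 1 + t * (w s - 1)) hnn
      rw [hF]
      simp only [map_sub, map_mul]
      unfold Wt at this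
      linarith [this]
    have hinf : {x | Fhat.IsRoot x}.Infinite := by
      apply Set.Infinite.mono (fun t ht => hroots t ht)
      exact Set.Ioo_infinite (by linarith)
    have hFhat0 : Fhat = 0 := Polynomial.eq_zero_of_infinite_isRoot _ hinf
    have h1 := heval 1
    rw [hFhat0] at h1
    have hw : (fun s : (i : I) × Ω i => 1 + 1 * (w s - 1)) = w := by
      funext s; ring
    rw [hw] at h1
    simpa using h1.symm
  have : F = 0 := by
    apply MvPolynomial.funext
    intro x
    rw [hFzero x]
    simp
  rw [hF] at this
  exact sub_eq_zero.1 this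

end Identity


section Scale

open MvPolynomial

variable [Fintype I] [DecidableEq I] [∀ i, Fintype (Ω i)] [∀ i, Nonempty (Ω i)]

/-- Scaling all variables of block `k` by a fresh polynomial variable. -/
noncomputable def scaleK (k : I) :
    MvPolynomial ((i : I) × Ω i) ℝ →ₐ[ℝ] Polynomial (MvPolynomial ((i : I) × Ω i) ℝ) :=
  MvPolynomial.aeval (fun s => if s.1 = k then Polynomial.C (X s) * Polynomial.X
    else Polynomial.C (X s))

theorem scaleK_eval_one (k : I) (P : MvPolynomial ((i : I) × Ω i) ℝ) :
    Polynomial.eval (1 : MvPolynomial ((i : I) × Ω i) ℝ) (scaleK k P) = P := by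
  have key : (Polynomial.evalRingHom (1 : MvPolynomial ((i : I) × Ω i) ℝ)).comp
      (scaleK k).toRingHom = RingHom.id (MvPolynomial ((i : I) × Ω i) ℝ) := by
    apply MvPolynomial.ringHom_ext
    · intro r
      simp [scaleK]
    · intro s
      by_cases hs : s.1 = k <;> simp [scaleK, hs]
  exact DFunLike.congr_fun key P

theorem scaleK_X (k : I) (s : (i : I) × Ω i) :
    scaleK k (X s) = if s.1 = k then Polynomial.C (X s) * Polynomial.X
      else Polynomial.C (X s) := by
  unfold scaleK
  rw [MvPolynomial.aeval_X]

theorem scaleK_eval_gen (k : I) (v : ((i : I) × Ω i) → ℝ) (t : ℝ)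
    (P : MvPolynomial ((i : I) × Ω i) ℝ) :
    Polynomial.eval t ((scaleK k P).map (MvPolynomial.eval v)) =
      eval (fun s => if s.1 = k then t * v s else v s) P := by
  have key : ((Polynomial.evalRingHom t).comp (Polynomial.mapRingHom (MvPolynomial.eval v))).comp
      (scaleK k).toRingHom = (MvPolynomial.eval (fun s => if s.1 = k then t * v s else v s)) := by
    apply MvPolynomial.ringHom_ext
    · intro r
      simp [scaleK]
    · intro s
      simp only [RingHom.coe_comp, Function.comp_apply, AlgHom.toRingHom_eq_coe,
        RingHom.coe_coe, scaleK_X, MvPolynomial.eval_X]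
      by_cases hs : s.1 = k
      · rw [if_pos hs, if_pos hs]
        simp only [Polynomial.coe_mapRingHom, Polynomial.coe_evalRingHom]
        rw [Polynomial.map_mul, Polynomial.map_C, Polynomial.map_X, Polynomial.eval_mul,
          Polynomial.eval_C, Polynomial.eval_X, MvPolynomial.eval_X, mul_comm]
      · rw [if_neg hs, if_neg hs]
        simp only [Polynomial.coe_mapRingHom, Polynomial.coe_evalRingHom]
        rw [Polynomial.map_C, Polynomial.eval_C, MvPolynomial.eval_X]
  exact DFunLike.congr_fun key P

theorem scaleK_monOn (k : I) (E : Set I) (ω : ∀ i, Ω i) :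
    scaleK k (monOn E ω) =
      Polynomial.C (monOn E ω) * (if k ∈ E then Polynomial.X else 1) := by
  unfold monOn
  rw [map_prod]
  have hfac : ∀ i : I, scaleK k (if i ∈ E then X (⟨i, ω i⟩ : (i : I) × Ω i) else 1) =
      Polynomial.C (if i ∈ E then X (⟨i, ω i⟩ : (i : I) × Ω i) else 1) *
        (if i = k ∧ i ∈ E then Polynomial.X else 1) := by
    intro i
    by_cases hiE : i ∈ E
    · by_cases hik : i = k
      · subst hik
        rw [if_pos hiE, if_pos (show i = i ∧ i ∈ E from ⟨rfl, hiE⟩), scaleK_X,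
          if_pos (show (⟨i, ω i⟩ : (i : I) × Ω i).1 = i from rfl)]
      · rw [if_pos hiE, if_neg (show ¬(i = k ∧ i ∈ E) from fun hand => hik hand.1),
          scaleK_X, if_neg (show ¬(⟨i, ω i⟩ : (i : I) × Ω i).1 = k from hik), mul_one]
    · rw [if_neg hiE, if_neg (show ¬(i = k ∧ i ∈ E) from fun hand => hiE hand.2),
        map_one, mul_one, Polynomial.C_1]
  rw [Finset.prod_congr rfl (fun i _ => hfac i), Finset.prod_mul_distrib]
  congr 1
  · rw [← map_prod]
  · rw [Finset.prod_eq_single k]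
    · by_cases hk : k ∈ E <;> simp [hk]
    · intro i _ hik
      simp [hik]
    · intro hk
      exact absurd (Finset.mem_univ k) hk

theorem scaleK_phiOn (k : I) (E : Set I) (S : Set (∀ i, Ω i)) :
    scaleK k (PhiOn E S) =
      Polynomial.C (PhiOn E S) * (if k ∈ E then Polynomial.X else 1) := by
  unfold PhiOn
  rw [map_sum, Finset.sum_congr rfl (fun ω _ => scaleK_monOn k E ω), ← Finset.sum_mul,
    ← map_sum]

theorem phiOn_ne_zero {E : Set I} {S : Set (∀ i, Ω i)} (hS : S.Nonempty) :
    PhiOn E S ≠ 0 := by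
  intro h0
  obtain ⟨ω, hω⟩ := hS
  have hmem : padS E ω ∈ (Set.toFinite (projSet E S)).toFinset := by
    rw [Set.Finite.mem_toFinset]; exact padS_mem_projSet hω
  have hpos : 0 < (Set.toFinite (projSet E S)).toFinset.card :=
    Finset.card_pos.2 ⟨_, hmem⟩
  have h1 : eval (fun _ => (1:ℝ)) (PhiOn E S) =
      (((Set.toFinite (projSet E S)).toFinset.card : ℕ) : ℝ) := by
    rw [eval_PhiOn]
    have hone : ∀ u ∈ (Set.toFinite (projSet E S)).toFinset,
        (∏ i : I, if i ∈ E then (1:ℝ) else 1) = 1 := by intros; simp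
    rw [Finset.sum_congr rfl hone, Finset.sum_const, nsmul_eq_mul, mul_one]
  rw [h0, map_zero] at h1
  have : (Set.toFinite (projSet E S)).toFinset.card = 0 := by exact_mod_cast h1.symm
  omega

/-- `P` does not involve the variables of block `k` (semantically). -/
def kFree (k : I) (P : MvPolynomial ((i : I) × Ω i) ℝ) : Prop :=
  ∀ v v' : ((i : I) × Ω i) → ℝ, (∀ s, s.1 ≠ k → v s = v' s) → eval v P = eval v' P

theorem kfree_of_deg_zero {k : I} {P : MvPolynomial ((i : I) × Ω i) ℝ}
    (h : (scaleK k P).natDegree = 0) : kFree k P := by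
  obtain ⟨c, hc⟩ := Polynomial.natDegree_eq_zero.1 h
  have main : ∀ v : ((i : I) × Ω i) → ℝ,
      eval v P = eval (fun s => if s.1 = k then 0 else v s) P := by
    intro v
    have h1 := scaleK_eval_gen k v 1 P
    have h0 := scaleK_eval_gen k v 0 P
    rw [← hc] at h1 h0
    simp only [Polynomial.map_C, Polynomial.eval_C] at h1 h0
    have e1 : (fun s : (i : I) × Ω i => if s.1 = k then 1 * v s else v s) = v := by
      funext s; by_cases hs : s.1 = k <;> simp [hs]
    have e0 : (fun s : (i : I) × Ω i => if s.1 = k then 0 * v s else v s) =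
        (fun s : (i : I) × Ω i => if s.1 = k then 0 else v s) := by
      funext s; by_cases hs : s.1 = k <;> simp [hs]
    rw [e1] at h1
    rw [e0] at h0
    rw [← h1, ← h0]
  intro v v' hagree
  have hfe : (fun s : (i : I) × Ω i => if s.1 = k then 0 else v s) =
      (fun s : (i : I) × Ω i => if s.1 = k then 0 else v' s) := by
    funext s
    by_cases hs : s.1 = k
    · simp [hs]
    · simp only [if_neg hs]
      exact hagree s hs
  rw [main v, main v', hfe]

theorem eval_invariant_of_kfree {F : Set I} {P : MvPolynomial ((i : I) × Ω i) ℝ}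
    (hfree : ∀ k, k ∉ F → kFree k P)
    (v v' : ((i : I) × Ω i) → ℝ) (hagree : ∀ s : (i : I) × Ω i, s.1 ∈ F → v s = v' s) :
    eval v P = eval v' P := by
  have key : ∀ T : Finset I, eval v P = eval (fun s => if s.1 ∈ T then v' s else v s) P := by
    intro T
    induction T using Finset.induction_on with
    | empty =>
      have hfe : (fun s : (i : I) × Ω i => if s.1 ∈ (∅ : Finset I) then v' s else v s) = v := by
        funext s; simp
      rw [hfe]
    | @insert k T hk ih =>
      by_cases hkF : k ∈ F
      · rw [ih]
        have hfe : (fun s : (i : I) × Ω i => if s.1 ∈ T then v' s else v s) =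
            (fun s : (i : I) × Ω i => if s.1 ∈ insert k T then v' s else v s) := by
          funext s
          by_cases h1 : s.1 ∈ T
          · simp [h1, Finset.mem_insert_of_mem h1]
          · by_cases h2 : s.1 = k
            · rw [if_neg h1, if_pos (Finset.mem_insert.2 (Or.inl h2))]
              exact hagree s (by rwa [h2] : s.1 ∈ F)
            · simp [h1, h2]
        rw [hfe]
      · rw [ih]
        apply hfree k hkF
        intro s hs
        by_cases h1 : s.1 ∈ T
        · simp [h1, Finset.mem_insert_of_mem h1]
        · have : s.1 ∉ insert k T := by
            simp only [Finset.mem_insert]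
            push_neg
            exact ⟨hs, h1⟩
          simp [h1, this]
  have hu := key Finset.univ
  have hfe : (fun s : (i : I) × Ω i => if s.1 ∈ (Finset.univ : Finset I) then v' s else v s) = v' := by
    funext s; simp
  rw [hu, hfe]

/-- Delta evaluation at a point. -/
noncomputable def deltaV (ω : ∀ i, Ω i) : ((i : I) × Ω i) → ℝ :=
  fun s => if ω s.1 = s.2 then 1 else 0

theorem eval_deltaV_phiOn (ω : ∀ i, Ω i) (E : Set I) (S : Set (∀ i, Ω i)) :
    eval (deltaV ω) (PhiOn E S) = if padS E ω ∈ projSet E S then 1 else 0 := by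
  rw [eval_PhiOn]
  have hterm : ∀ u ∈ (Set.toFinite (projSet E S)).toFinset,
      (∏ i : I, if i ∈ E then deltaV ω ⟨i, u i⟩ else 1) =
        if u = padS E ω then (1 : ℝ) else 0 := by
    intro u hu
    simp only [Set.Finite.mem_toFinset] at hu
    by_cases heq : u = padS E ω
    · rw [if_pos heq]
      apply Finset.prod_eq_one
      intro i _
      by_cases hiE : i ∈ E
      · rw [if_pos hiE]
        unfold deltaV
        rw [if_pos]
        show ω i = u i
        rw [heq, padS_apply_mem hiE]
      · rw [if_neg hiE]
    · rw [if_neg heq]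
      have hex : ∃ i ∈ (Set.univ : Set I), i ∈ E ∧ u i ≠ ω i := by
        by_contra hno
        push_neg at hno
        apply heq
        funext i
        by_cases hiE : i ∈ E
        · rw [padS_apply_mem hiE]
          exact hno i (Set.mem_univ i) hiE
        · rw [padS_apply_not hiE, canonical_of_mem_projSet hu hiE]
      obtain ⟨i0, _, hi0E, hi0ne⟩ := hex
      apply Finset.prod_eq_zero (Finset.mem_univ i0)
      rw [if_pos hi0E]
      unfold deltaV
      rw [if_neg]
      exact fun hcontra => hi0ne hcontra.symm
  rw [Finset.sum_congr rfl hterm]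
  rw [Finset.sum_ite_eq' ((Set.toFinite (projSet E S)).toFinset) (padS E ω) (fun _ => (1:ℝ))]
  simp only [Set.Finite.mem_toFinset]

end Scale


section Irred

open MvPolynomial

variable [Fintype I] [DecidableEq I] [∀ i, Fintype (Ω i)] [∀ i, Nonempty (Ω i)]

theorem dis_of_projClosure {E F : Set I} {C : Set (∀ i, Ω i)}
    (hdisE : Disintegrates E C) (hFE : F ⊆ E)
    (hclose : ∀ ω1 ∈ C, ∀ ω2 ∈ C, padS E (mixS F ω1 ω2) ∈ projSet E C) :
    Disintegrates F C := by
  rw [dis_iff_mix]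
  intro x hx y hy
  obtain ⟨c'', hc'', hpad⟩ := hclose x hx y hy
  have h1 : mixS F x y = mixS E (mixS F x y) y := by
    funext i
    by_cases hiE : i ∈ E
    · rw [mixS_mem_left hiE]
    · rw [mixS_mem_right hiE, mixS_mem_right (fun hiF => hiE (hFE hiF))]
  have h2 : mixS E (mixS F x y) y = mixS E c'' y := by
    funext i
    by_cases hiE : i ∈ E
    · rw [mixS_mem_left hiE, mixS_mem_left hiE]
      have := congrFun hpad i
      rw [padS_apply_mem hiE, padS_apply_mem hiE] at this
      exact this.symm
    · rw [mixS_mem_right hiE, mixS_mem_right hiE]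
  rw [h1, h2]
  exact (dis_iff_mix.1 hdisE) c'' hc'' y hy

theorem isUnit_of_allfree {G : MvPolynomial ((i : I) × Ω i) ℝ} (hG : G ≠ 0)
    (hfree : ∀ k, kFree k G) : IsUnit G := by
  have hinv : ∀ v v' : ((i : I) × Ω i) → ℝ, eval v G = eval v' G := by
    intro v v'
    exact eval_invariant_of_kfree (F := (∅ : Set I)) (fun k _ => hfree k) v v'
      (fun s hs => absurd hs (Set.notMem_empty _))
  set c := eval (fun _ => (0:ℝ)) G with hc
  have hGc : G = MvPolynomial.C c := by
    apply MvPolynomial.funext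
    intro x
    rw [MvPolynomial.eval_C]
    exact hinv x (fun _ => 0)
  have hcne : c ≠ 0 := by
    intro h0
    apply hG
    rw [hGc, h0, map_zero]
  rw [hGc]
  exact IsUnit.of_mul_eq_one (MvPolynomial.C c⁻¹)
    (by rw [← map_mul, mul_inv_cancel₀ hcne, map_one])

theorem phiOn_irreducible {C : Set (∀ i, Ω i)} {E : Set I} (hC : C.Nonempty)
    (hdisE : Disintegrates E C) (hEne : E.Nonempty)
    (hatom : ∀ F, Disintegrates F C → F ⊆ E → F = ∅ ∨ F = E) :
    Irreducible (PhiOn E C) := by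
  constructor
  · intro hunit
    obtain ⟨i0, hi0⟩ := hEne
    obtain ⟨u, hu⟩ := hunit.exists_right_inv
    have heval := congrArg (eval (fun _ => (0:ℝ))) hu
    rw [map_mul, map_one] at heval
    have hz : eval (fun _ => (0:ℝ)) (PhiOn E C) = 0 := by
      rw [eval_PhiOn]
      apply Finset.sum_eq_zero
      intro w hw
      apply Finset.prod_eq_zero (Finset.mem_univ i0)
      rw [if_pos hi0]
    rw [hz, zero_mul] at heval
    exact zero_ne_one heval
  · rintro G H hGH
    have hPhine : PhiOn E C ≠ 0 := phiOn_ne_zero hC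
    have hGne : G ≠ 0 := fun h => hPhine (by rw [hGH, h, zero_mul])
    have hHne : H ≠ 0 := fun h => hPhine (by rw [hGH, h, mul_zero])
    have hsGne : ∀ k, scaleK k G ≠ 0 := by
      intro k h
      apply hGne
      have h1 := scaleK_eval_one k G
      rw [h] at h1
      simpa using h1.symm
    have hsHne : ∀ k, scaleK k H ≠ 0 := by
      intro k h
      apply hHne
      have h1 := scaleK_eval_one k H
      rw [h] at h1
      simpa using h1.symm
    have hscale : ∀ k : I, (scaleK k G).natDegree + (scaleK k H).natDegree =
        if k ∈ E then 1 else 0 := by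
      intro k
      have hGHs : scaleK k G * scaleK k H =
          Polynomial.C (PhiOn E C) * (if k ∈ E then Polynomial.X else 1) := by
        rw [← map_mul, ← hGH, scaleK_phiOn]
      rw [← Polynomial.natDegree_mul (hsGne k) (hsHne k), hGHs]
      by_cases hk : k ∈ E
      · rw [if_pos hk, if_pos hk, Polynomial.natDegree_C_mul_X _ hPhine]
      · rw [if_neg hk, if_neg hk, mul_one, Polynomial.natDegree_C]
    set F : Set I := {k | ¬ kFree k G} with hFdef
    have hGfree : ∀ k, k ∉ F → kFree k G := by
      intro k hk
      by_contra hno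
      exact hk hno
    have hFsub : F ⊆ E := by
      intro k hk
      by_contra hkE
      apply hk
      have := hscale k
      rw [if_neg hkE] at this
      exact kfree_of_deg_zero (by omega)
    have hHfree : ∀ k, k ∈ F → kFree k H := by
      intro k hk
      have hkE : k ∈ E := hFsub hk
      have := hscale k
      rw [if_pos hkE] at this
      by_cases hdeg : (scaleK k G).natDegree = 0
      · exact absurd (kfree_of_deg_zero hdeg) hk
      · exact kfree_of_deg_zero (by omega)
    have hHfreeOut : ∀ k, k ∉ E → kFree k H := by
      intro k hkE
      have := hscale k
      rw [if_neg hkE] at this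
      exact kfree_of_deg_zero (by omega)
    by_cases hF0 : F = ∅
    · left
      apply isUnit_of_allfree hGne
      intro k
      apply hGfree
      rw [hF0]
      exact Set.notMem_empty k
    · by_cases hFE : F = E
      · right
        apply isUnit_of_allfree hHne
        intro k
        by_cases hkE : k ∈ E
        · exact hHfree k (by rw [hFE]; exact hkE)
        · exact hHfreeOut k hkE
      · exfalso
        have hHallfree : ∀ k, k ∉ (E \ F : Set I) → kFree k H := by
          intro k hk
          by_cases hkE : k ∈ E
          · have hkF : k ∈ F := by
              by_contra hkF
              exact hk ⟨hkE, hkF⟩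
            exact hHfree k hkF
          · exact hHfreeOut k hkE
        have hclosure : ∀ ω1 ∈ C, ∀ ω2 ∈ C, padS E (mixS F ω1 ω2) ∈ projSet E C := by
          intro ω1 h1 ω2 h2
          set g : (∀ i, Ω i) → ℝ := fun ω => eval (deltaV ω) G with hgdef
          set hh : (∀ i, Ω i) → ℝ := fun ω => eval (deltaV ω) H with hhdef
          have hind : ∀ ω : ∀ i, Ω i, eval (deltaV ω) (PhiOn E C) = g ω * hh ω := by
            intro ω; rw [hGH, map_mul]
          have hgdep : ∀ ω ω' : ∀ i, Ω i, (∀ i ∈ F, ω i = ω' i) → g ω = g ω' := by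
            intro ω ω' hag
            apply eval_invariant_of_kfree hGfree
            intro s hs
            unfold deltaV
            rw [hag s.1 hs]
          have hhdep : ∀ ω ω' : ∀ i, Ω i, (∀ i ∈ (E \ F : Set I), ω i = ω' i) → hh ω = hh ω' := by
            intro ω ω' hag
            apply eval_invariant_of_kfree hHallfree
            intro s hs
            unfold deltaV
            rw [hag s.1 hs]
          set m1 := mixS F ω1 ω2 with hm1
          set m2 := mixS F ω2 ω1 with hm2
          have e1 : eval (deltaV m1) (PhiOn E C) = g ω1 * hh ω2 := by
            rw [hind]
            congr 1
            · exact hgdep m1 ω1 (fun i hi => mixS_mem_left hi)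
            · exact hhdep m1 ω2 (fun i hi => mixS_mem_right (fun hiF => hi.2 hiF))
          have e2 : eval (deltaV m2) (PhiOn E C) = g ω2 * hh ω1 := by
            rw [hind]
            congr 1
            · exact hgdep m2 ω2 (fun i hi => mixS_mem_left hi)
            · exact hhdep m2 ω1 (fun i hi => mixS_mem_right (fun hiF => hi.2 hiF))
          have hv1 : g ω1 * hh ω1 = 1 := by
            rw [← hind, eval_deltaV_phiOn, if_pos (padS_mem_projSet h1)]
          have hv2 : g ω2 * hh ω2 = 1 := by
            rw [← hind, eval_deltaV_phiOn, if_pos (padS_mem_projSet h2)]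
          have hprod : eval (deltaV m1) (PhiOn E C) * eval (deltaV m2) (PhiOn E C) = 1 := by
            rw [e1, e2]
            calc g ω1 * hh ω2 * (g ω2 * hh ω1) = (g ω1 * hh ω1) * (g ω2 * hh ω2) := by ring
              _ = 1 := by rw [hv1, hv2, one_mul]
          by_contra hnot
          rw [eval_deltaV_phiOn, eval_deltaV_phiOn, if_neg hnot, zero_mul] at hprod
          exact zero_ne_one hprod
        have hdisF : Disintegrates F C := dis_of_projClosure hdisE hFsub hclosure
        rcases hatom F hdisF hFsub with h | h
        · exact hF0 h
        · exact hFE h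

end Irred


section Extract

/-- Coefficient extraction: if `(1 + X^d) ψ = C a + C b X^d` with `d ≥ 1`, then `a = b`. -/
theorem coeff_extract {d : ℕ} (hd : 1 ≤ d) {ψ : Polynomial ℝ} {aa bb : ℝ}
    (h : (1 + Polynomial.X ^ d) * ψ = Polynomial.C aa + Polynomial.C bb * Polynomial.X ^ d) :
    aa = bb := by
  have h' : ψ + ψ * Polynomial.X ^ d = Polynomial.C aa + Polynomial.C bb * Polynomial.X ^ d := by
    linear_combination h
  have hcoeff : ∀ n : ℕ, ψ.coeff n + (if d ≤ n then ψ.coeff (n - d) else 0) =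
      (if n = 0 then aa else 0) + (if d ≤ n then (if n - d = 0 then bb else 0) else 0) := by
    intro n
    have hc := congrArg (fun p => Polynomial.coeff p n) h'
    simpa [Polynomial.coeff_add, Polynomial.coeff_mul_X_pow', Polynomial.coeff_C,
      Polynomial.coeff_C_mul, Polynomial.coeff_X_pow] using hc
  have h0 : ψ.coeff 0 = aa := by
    have := hcoeff 0
    rw [if_pos rfl, if_neg (show ¬ d ≤ 0 by omega), if_neg (show ¬ d ≤ 0 by omega)] at this
    simpa using this
  have hdd : ψ.coeff d + ψ.coeff 0 = bb := by
    have := hcoeff d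
    rw [if_pos le_rfl, if_neg (show ¬ d = 0 by omega), if_pos le_rfl,
      if_pos (show d - d = 0 by omega)] at this
    simp only [Nat.sub_self] at this
    linarith [this]
  have hchain : ∀ m : ℕ, 2 ≤ m → ψ.coeff (m * d) + ψ.coeff ((m - 1) * d) = 0 := by
    intro m hm
    have h2d : 2 * d ≤ m * d := Nat.mul_le_mul_right d hm
    have := hcoeff (m * d)
    rw [if_pos (show d ≤ m * d by omega), if_neg (show ¬ m * d = 0 by omega),
      if_pos (show d ≤ m * d by omega), if_neg (show ¬ m * d - d = 0 by omega)] at this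
    have harith : m * d - d = (m - 1) * d := by
      cases m with
      | zero => omega
      | succ m' => simp [Nat.succ_sub_one, Nat.succ_mul]
    rw [harith] at this
    simpa using this
  have hpow : ∀ m : ℕ, 1 ≤ m → ψ.coeff (m * d) = (-1 : ℝ)^(m-1) * ψ.coeff d := by
    intro m
    induction m with
    | zero => omega
    | succ m' ih =>
      intro _
      by_cases hm' : 1 ≤ m'
      · have hc := hchain (m' + 1) (by omega)
        have : (m' + 1 - 1) = m' := by omega
        rw [this] at hc
        have := ih hm'
        have he : ψ.coeff ((m' + 1) * d) = - ((-1:ℝ)^(m'-1) * ψ.coeff d) := by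
          rw [← this]; linarith [hc]
        have hgoal : ((-1:ℝ))^(m' + 1 - 1) = -((-1:ℝ))^(m' - 1) := by
          have e1 : m' + 1 - 1 = (m' - 1) + 1 := by omega
          rw [e1, pow_succ]
          ring
        rw [he, hgoal]
        ring
      · have hm0 : m' = 0 := by omega
        subst hm0
        simp
  have hlarge : ψ.coeff d = 0 := by
    set m := ψ.natDegree + 1 with hm
    have h1 : ψ.coeff (m * d) = 0 := by
      apply Polynomial.coeff_eq_zero_of_natDegree_lt
      have : m ≤ m * d := Nat.le_mul_of_pos_right m (by omega)
      omega
    have h2 := hpow m (by omega)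
    rw [h1] at h2
    have hne : ((-1 : ℝ))^(m-1) ≠ 0 := by
      apply pow_ne_zero
      norm_num
    field_simp at h2
    exact (mul_eq_zero.1 h2.symm).resolve_left hne
  rw [← h0, ← hdd, hlarge, zero_add]

end Extract


section Transfer

open MvPolynomial

variable [Fintype I] [DecidableEq I] [∀ i, Fintype (Ω i)] [∀ i, Nonempty (Ω i)]

theorem slice_transfer_edge {C S : Set (∀ i, Ω i)} {E : Set I}
    (hS : S ⊆ C) {u u' : ∀ i, Ω i}
    (hu : u ∈ projSet E C) (hu' : u' ∈ projSet E C) (hne : u ≠ u')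
    (hedge : ∀ m ∈ projSet E C, (∀ i, m i = u i ∨ m i = u' i) → m = u ∨ m = u')
    {Ψ : MvPolynomial ((i : I) × Ω i) ℝ} (hΨ : PhiOn Set.univ S = PhiOn E C * Ψ)
    (ω0 : ∀ i, Ω i) : (mixS E u ω0 ∈ S ↔ mixS E u' ω0 ∈ S) := by
  classical
  -- difference set
  set D : Finset I := Finset.univ.filter (fun i => u i ≠ u' i) with hD
  set d : ℕ := D.card with hdcard
  have hDE : ∀ i ∈ D, i ∈ E := by
    intro i hi
    simp only [hD, Finset.mem_filter, Finset.mem_univ, true_and] at hi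
    by_contra hiE
    exact hi ((canonical_of_mem_projSet hu hiE).trans (canonical_of_mem_projSet hu' hiE).symm)
  have hd1 : 1 ≤ d := by
    rcases Finset.eq_empty_or_nonempty D with hD0 | hD0
    · exfalso
      apply hne
      funext i
      by_contra hi
      have : i ∈ D := by simp [hD, hi]
      rw [hD0] at this
      simp at this
    · rw [hdcard]
      exact Finset.card_pos.2 hD0
  -- indicator weights
  set aind : ((i : I) × Ω i) → ℝ := fun s => if u s.1 = s.2 then 1 else 0 with haind
  set bind : ((i : I) × Ω i) → ℝ :=
    fun s => if u' s.1 = s.2 ∧ ¬ u s.1 = u' s.1 then 1 else 0 with hbind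
  -- the per-pattern factor computation
  have hterm : ∀ m ∈ projSet E C, ∀ t : ℝ,
      (∏ i : I, if i ∈ E then (aind ⟨i, m i⟩ + bind ⟨i, m i⟩ * t) else 1) =
        (if m = u then 1 else 0) + (if m = u' then t^d else 0) := by
    intro m hm t
    by_cases hmu : m = u
    · subst hmu
      rw [if_pos rfl, if_neg hne]
      have : ∀ i : I, (if i ∈ E then (aind ⟨i, m i⟩ + bind ⟨i, m i⟩ * t) else 1) = 1 := by
        intro i
        by_cases hiE : i ∈ E
        · rw [if_pos hiE]
          have ha : aind ⟨i, m i⟩ = 1 := if_pos rfl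
          have hb : bind ⟨i, m i⟩ = 0 := by
            apply if_neg
            rintro ⟨h1, h2⟩
            exact h2 h1.symm
          rw [ha, hb]
          ring
        · rw [if_neg hiE]
      rw [Finset.prod_congr rfl (fun i _ => this i)]
      simp
    · by_cases hmu' : m = u'
      · subst hmu'
        rw [if_neg hmu, if_pos rfl]
        have hfac : ∀ i : I, (if i ∈ E then (aind ⟨i, m i⟩ + bind ⟨i, m i⟩ * t) else 1) =
            (if i ∈ D then t else 1) := by
          intro i
          by_cases hiD : i ∈ D
          · have hiE : i ∈ E := hDE i hiD
            have hine : u i ≠ m i := by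
              simpa [hD, Finset.mem_filter] using hiD
            rw [if_pos hiE, if_pos hiD]
            have ha : aind ⟨i, m i⟩ = 0 := if_neg hine
            have hb : bind ⟨i, m i⟩ = 1 := if_pos ⟨rfl, hine⟩
            rw [ha, hb]
            ring
          · rw [if_neg hiD]
            by_cases hiE : i ∈ E
            · have hieq : u i = m i := by
                by_contra hc
                exact hiD (by simp [hD, hc])
              rw [if_pos hiE]
              have ha : aind ⟨i, m i⟩ = 1 := if_pos hieq
              have hb : bind ⟨i, m i⟩ = 0 := by
                apply if_neg
                rintro ⟨_, h2⟩
                exact h2 hieq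
              rw [ha, hb]
              ring
            · rw [if_neg hiE]
        rw [Finset.prod_congr rfl (fun i _ => hfac i)]
        rw [Finset.prod_ite_mem Finset.univ D (fun _ => t), Finset.univ_inter,
          Finset.prod_const]
        simp [hdcard]
      · rw [if_neg hmu, if_neg hmu']
        have hex : ∃ i, i ∈ E ∧ m i ≠ u i ∧ m i ≠ u' i := by
          by_contra hno
          push_neg at hno
          have hmix : ∀ i, m i = u i ∨ m i = u' i := by
            intro i
            by_cases hiE : i ∈ E
            · by_cases h1 : m i = u i
              · exact Or.inl h1
              · right
                rcases hno i hiE h1 with h2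
                exact h2
            · left
              rw [canonical_of_mem_projSet hm hiE, canonical_of_mem_projSet hu hiE]
          rcases hedge m hm hmix with h | h
          · exact hmu h
          · exact hmu' h
        obtain ⟨i0, hi0E, hi0u, hi0u'⟩ := hex
        rw [show (0:ℝ) + 0 = 0 by ring]
        apply Finset.prod_eq_zero (Finset.mem_univ i0)
        rw [if_pos hi0E]
        have ha : aind ⟨i0, m i0⟩ = 0 := if_neg (fun hh => hi0u hh.symm)
        have hb : bind ⟨i0, m i0⟩ = 0 := by
          apply if_neg
          rintro ⟨h1, _⟩
          exact hi0u' h1.symm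
        rw [ha, hb]
        ring
  -- main per-weight claim : the two slice sums agree
  have main : ∀ v : ((i : I) × Ω i) → ℝ,
      (∑ ω ∈ (Set.toFinite S).toFinset,
        (if padS E ω = u then (∏ i : I, if i ∈ E then 1 else v ⟨i, ω i⟩) else 0)) =
      (∑ ω ∈ (Set.toFinite S).toFinset,
        (if padS E ω = u' then (∏ i : I, if i ∈ E then 1 else v ⟨i, ω i⟩) else 0)) := by
    intro v
    set ℓv : ((i : I) × Ω i) → Polynomial ℝ := fun s =>
      if s.1 ∈ E then Polynomial.C (aind s) + Polynomial.C (bind s) * Polynomial.X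
      else Polynomial.C (v s) with hℓv
    have hvline : ∀ t : ℝ, (fun s => (ℓv s).eval t) =
        (fun s => if s.1 ∈ E then aind s + bind s * t else v s) := by
      intro t
      funext s
      by_cases hs : s.1 ∈ E <;> simp [hℓv, hs]
    set Su : ℝ := ∑ ω ∈ (Set.toFinite S).toFinset,
        (if padS E ω = u then (∏ i : I, if i ∈ E then 1 else v ⟨i, ω i⟩) else 0) with hSu
    set Su' : ℝ := ∑ ω ∈ (Set.toFinite S).toFinset,
        (if padS E ω = u' then (∏ i : I, if i ∈ E then 1 else v ⟨i, ω i⟩) else 0) with hSu'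
    -- Claim 1 : φ̂ evaluations
    have claim1 : ∀ t : ℝ,
        eval (fun s => if s.1 ∈ E then aind s + bind s * t else v s) (PhiOn E C) =
          1 + t^d := by
      intro t
      rw [eval_PhiOn]
      have hper : ∀ m ∈ (Set.toFinite (projSet E C)).toFinset,
          (∏ i : I, if i ∈ E then
              (if (⟨i, m i⟩ : (i : I) × Ω i).1 ∈ E then aind ⟨i, m i⟩ + bind ⟨i, m i⟩ * t
                else v ⟨i, m i⟩) else 1) =
            (if m = u then 1 else 0) + (if m = u' then t^d else 0) := by
        intro m hm
        rw [Set.Finite.mem_toFinset] at hm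
        rw [← hterm m hm t]
        apply Finset.prod_congr rfl
        intro i _
        by_cases hiE : i ∈ E <;> simp [hiE]
      rw [Finset.sum_congr rfl hper, Finset.sum_add_distrib]
      have humem : u ∈ (Set.toFinite (projSet E C)).toFinset := by
        rw [Set.Finite.mem_toFinset]; exact hu
      have humem' : u' ∈ (Set.toFinite (projSet E C)).toFinset := by
        rw [Set.Finite.mem_toFinset]; exact hu'
      rw [Finset.sum_ite_eq' _ u (fun _ => (1:ℝ)), if_pos humem,
        Finset.sum_ite_eq' _ u' (fun _ => t^d), if_pos humem']
    -- Claim 2 : Ŝ evaluations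
    have claim2 : ∀ t : ℝ,
        eval (fun s => if s.1 ∈ E then aind s + bind s * t else v s) (PhiOn Set.univ S) =
          Su + t^d * Su' := by
      intro t
      rw [eval_PhiOn]
      have hfs : (Set.toFinite (projSet Set.univ S)).toFinset = (Set.toFinite S).toFinset := by
        ext ω; simp [Set.Finite.mem_toFinset, projSet_univ]
      rw [hfs]
      simp only [Set.mem_univ, ite_true]
      have hper : ∀ ω ∈ (Set.toFinite S).toFinset,
          (∏ i : I,
              (if (⟨i, ω i⟩ : (i : I) × Ω i).1 ∈ E then aind ⟨i, ω i⟩ + bind ⟨i, ω i⟩ * t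
                else v ⟨i, ω i⟩)) =
            (if padS E ω = u then (∏ i : I, if i ∈ E then 1 else v ⟨i, ω i⟩) else 0) +
              t^d * (if padS E ω = u' then (∏ i : I, if i ∈ E then 1 else v ⟨i, ω i⟩) else 0) := by
        intro ω hω
        rw [Set.Finite.mem_toFinset] at hω
        have hsplit : (∏ i : I,
            (if (⟨i, ω i⟩ : (i : I) × Ω i).1 ∈ E then aind ⟨i, ω i⟩ + bind ⟨i, ω i⟩ * t
              else v ⟨i, ω i⟩)) =
            (∏ i : I, if i ∈ E then (aind ⟨i, (padS E ω) i⟩ + bind ⟨i, (padS E ω) i⟩ * t) else 1) *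
            (∏ i : I, if i ∈ E then 1 else v ⟨i, ω i⟩) := by
          rw [← Finset.prod_mul_distrib]
          apply Finset.prod_congr rfl
          intro i _
          by_cases hiE : i ∈ E
          · simp only [if_pos hiE, mul_one, padS_apply_mem hiE]
          · simp only [if_neg hiE, one_mul]
        rw [hsplit]
        have hpadmem : padS E ω ∈ projSet E C := padS_mem_projSet (hS hω)
        rw [hterm (padS E ω) hpadmem t]
        by_cases h1 : padS E ω = u
        · have h2 : ¬ padS E ω = u' := by
            rw [h1]; exact hne
          rw [if_pos h1, if_neg h2, if_pos h1, if_neg h2]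
          ring
        · by_cases h2 : padS E ω = u'
          · rw [if_neg h1, if_pos h2, if_neg h1, if_pos h2]
            ring
          · rw [if_neg h1, if_neg h2, if_neg h1, if_neg h2]
            ring
      refine (Finset.sum_congr rfl hper).trans ?_
      rw [Finset.sum_add_distrib, ← Finset.mul_sum, ← hSu, ← hSu']
    -- to polynomials
    have hφ : MvPolynomial.aeval ℓv (PhiOn E C) = 1 + Polynomial.X ^ d := by
      apply Polynomial.funext
      intro r
      rw [eval_aeval_line, hvline r, claim1 r]
      simp
    have hShat : MvPolynomial.aeval ℓv (PhiOn Set.univ S) =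
        Polynomial.C Su + Polynomial.C Su' * Polynomial.X ^ d := by
      apply Polynomial.funext
      intro r
      rw [eval_aeval_line, hvline r, claim2 r]
      simp
      ring
    have hfact : (1 + Polynomial.X ^ d) * (MvPolynomial.aeval ℓv Ψ) =
        Polynomial.C Su + Polynomial.C Su' * Polynomial.X ^ d := by
      rw [← hφ, ← hShat, ← map_mul, ← hΨ]
    exact coeff_extract hd1 hfact
  -- instantiate with the delta weight
  have hdelta : ∀ w : ∀ i, Ω i, w ∈ projSet E C →
      (∑ ω ∈ (Set.toFinite S).toFinset,
        (if padS E ω = w then (∏ i : I, if i ∈ E then 1 else deltaV ω0 ⟨i, ω i⟩) else 0)) =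
      (if mixS E w ω0 ∈ S then 1 else 0) := by
    intro w hw
    have hper : ∀ ω ∈ (Set.toFinite S).toFinset,
        (if padS E ω = w then (∏ i : I, if i ∈ E then 1 else deltaV ω0 ⟨i, ω i⟩) else 0) =
          (if ω = mixS E w ω0 then 1 else 0) := by
      intro ω hω
      by_cases heq : ω = mixS E w ω0
      · subst heq
        have hpad : padS E (mixS E w ω0) = w := by
          funext i
          by_cases hiE : i ∈ E
          · rw [padS_apply_mem hiE, mixS_mem_left hiE]
          · rw [padS_apply_not hiE, canonical_of_mem_projSet hw hiE]
        rw [if_pos hpad, if_pos rfl]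
        apply Finset.prod_eq_one
        intro i _
        by_cases hiE : i ∈ E
        · rw [if_pos hiE]
        · rw [if_neg hiE]
          unfold deltaV
          rw [if_pos]
          show ω0 i = mixS E w ω0 i
          rw [mixS_mem_right hiE]
      · rw [if_neg heq]
        by_cases hpad : padS E ω = w
        · rw [if_pos hpad]
          have hex : ∃ i, i ∉ E ∧ ω i ≠ ω0 i := by
            by_contra hno
            push_neg at hno
            apply heq
            funext i
            by_cases hiE : i ∈ E
            · rw [mixS_mem_left hiE, ← hpad, padS_apply_mem hiE]
            · rw [mixS_mem_right hiE]
              exact hno i hiE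
          obtain ⟨i0, hi0E, hi0⟩ := hex
          apply Finset.prod_eq_zero (Finset.mem_univ i0)
          rw [if_neg hi0E]
          unfold deltaV
          apply if_neg
          exact fun hc => hi0 hc.symm
        · rw [if_neg hpad]
    rw [Finset.sum_congr rfl hper,
      Finset.sum_ite_eq' _ (mixS E w ω0) (fun _ => (1:ℝ))]
    simp only [Set.Finite.mem_toFinset]
  have hmain := main (deltaV ω0)
  rw [hdelta u hu, hdelta u' hu'] at hmain
  by_cases h1 : mixS E u ω0 ∈ S
  · rw [if_pos h1] at hmain
    by_cases h2 : mixS E u' ω0 ∈ S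
    · exact ⟨fun _ => h2, fun _ => h1⟩
    · rw [if_neg h2] at hmain
      exact absurd hmain one_ne_zero
  · rw [if_neg h1] at hmain
    by_cases h2 : mixS E u' ω0 ∈ S
    · rw [if_pos h2] at hmain
      exact absurd hmain.symm one_ne_zero
    · exact ⟨fun hc => absurd hc h1, fun hc => absurd hc h2⟩

theorem slice_transfer {C S : Set (∀ i, Ω i)} {E : Set I} (hS : S ⊆ C)
    (hdvd : PhiOn E C ∣ PhiOn Set.univ S) :
    ∀ n : ℕ, ∀ u ∈ projSet E C, ∀ u' ∈ projSet E C,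
      (Finset.univ.filter (fun i => u i ≠ u' i)).card ≤ n →
      ∀ ω0 : ∀ i, Ω i, (mixS E u ω0 ∈ S ↔ mixS E u' ω0 ∈ S) := by
  intro n
  induction n with
  | zero =>
    intro u hu u' hu' hcard ω0
    have : u = u' := by
      funext i
      by_contra hne
      have hmem : i ∈ Finset.univ.filter (fun i => u i ≠ u' i) := by simp [hne]
      have := Finset.card_pos.2 ⟨i, hmem⟩
      omega
    rw [this]
  | succ n ih =>
    intro u hu u' hu' hcard ω0
    by_cases heq : u = u'
    · rw [heq]
    · by_cases hedge : ∀ m ∈ projSet E C, (∀ i, m i = u i ∨ m i = u' i) → m = u ∨ m = u'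
      · obtain ⟨Ψ, hΨ⟩ := hdvd
        exact slice_transfer_edge hS hu hu' heq hedge hΨ ω0
      · push_neg at hedge
        obtain ⟨m, hm, hmix, hmu, hmu'⟩ := hedge
        have hsub1 : Finset.univ.filter (fun i => u i ≠ m i) ⊂
            Finset.univ.filter (fun i => u i ≠ u' i) := by
          constructor
          · intro i hi
            simp only [Finset.mem_filter, Finset.mem_univ, true_and] at hi ⊢
            intro hc
            rcases hmix i with h | h
            · exact hi h.symm
            · rw [h] at hi
              exact hi hc
          · intro hsub
            obtain ⟨j, hj⟩ : ∃ j, m j ≠ u' j := by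
              by_contra hno
              push_neg at hno
              exact hmu' (funext hno)
            have hju : m j = u j := (hmix j).resolve_right hj
            have hjmem : j ∈ Finset.univ.filter (fun i => u i ≠ u' i) := by
              simp only [Finset.mem_filter, Finset.mem_univ, true_and]
              intro hc
              rw [hju, hc] at hj
              exact hj rfl
            have := hsub hjmem
            simp only [Finset.mem_filter, Finset.mem_univ, true_and] at this
            exact this hju.symm
        have hsub2 : Finset.univ.filter (fun i => m i ≠ u' i) ⊂
            Finset.univ.filter (fun i => u i ≠ u' i) := by
          constructor
          · intro i hi
            simp only [Finset.mem_filter, Finset.mem_univ, true_and] at hi ⊢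
            intro hc
            rcases hmix i with h | h
            · rw [h, hc] at hi
              exact hi rfl
            · exact hi h
          · intro hsub
            obtain ⟨j, hj⟩ : ∃ j, m j ≠ u j := by
              by_contra hno
              push_neg at hno
              exact hmu (funext hno)
            have hju : m j = u' j := (hmix j).resolve_left hj
            have hjmem : j ∈ Finset.univ.filter (fun i => u i ≠ u' i) := by
              simp only [Finset.mem_filter, Finset.mem_univ, true_and]
              intro hc
              rw [hju] at hj
              exact hj hc.symm
            have := hsub hjmem
            simp only [Finset.mem_filter, Finset.mem_univ, true_and] at this
            exact this hju
        have hc1 := Finset.card_lt_card hsub1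
        have hc2 := Finset.card_lt_card hsub2
        have i1 := ih u hu m hm (by omega) ω0
        have i2 := ih m hm u' hu' (by omega) ω0
        exact i1.trans i2

theorem free_of_dvd {C S : Set (∀ i, Ω i)} {E : Set I} (hS : S ⊆ C)
    (hdvd : PhiOn E C ∣ PhiOn Set.univ S) :
    ∀ ω ∈ C, ∀ ω' ∈ C, (∀ j, j ∉ E → ω j = ω' j) → (ω ∈ S ↔ ω' ∈ S) := by
  intro ω hω ω' hω' hagree
  have h1 : mixS E (padS E ω) ω = ω := by
    funext i
    by_cases hiE : i ∈ E
    · rw [mixS_mem_left hiE, padS_apply_mem hiE]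
    · rw [mixS_mem_right hiE]
  have h2 : mixS E (padS E ω') ω = ω' := by
    funext i
    by_cases hiE : i ∈ E
    · rw [mixS_mem_left hiE, padS_apply_mem hiE]
    · rw [mixS_mem_right hiE]
      exact hagree i hiE
  have := slice_transfer hS hdvd
    ((Finset.univ.filter (fun i => padS E ω i ≠ padS E ω' i)).card)
    (padS E ω) (padS_mem_projSet hω) (padS E ω') (padS_mem_projSet hω') le_rfl ω
  rw [h1, h2] at this
  exact this

end Transfer


section Main

open MvPolynomial

variable [Fintype I] [DecidableEq I] [∀ i, Fintype (Ω i)] [∀ i, Nonempty (Ω i)]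

theorem main_dichotomy {A B C : Set (∀ i, Ω i)} (hC : C.Nonempty)
    (h : ∀ P : (∀ i, Ω i) → ℝ, Factorizes P →
      pr P (A ∩ C) * pr P (B ∩ C) = pr P (A ∩ B ∩ C) * pr P C) :
    ∀ i : I, FreeAt C A i ∨ FreeAt C B i := by
  intro i
  have hphi := phi_identity h
  set E := atomOf C i with hE
  have hdisE : Disintegrates E C := dis_atomOf C i
  have hEne : E.Nonempty := ⟨i, mem_atomOf C i⟩
  have hatom : ∀ F, Disintegrates F C → F ⊆ E → F = ∅ ∨ F = E := by
    intro F hdisF hFsub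
    rcases Set.eq_empty_or_nonempty F with h0 | ⟨k, hk⟩
    · exact Or.inl h0
    · right
      apply Set.Subset.antisymm hFsub
      have hk_atom : k ∈ atomOf C i := hFsub hk
      have hkk : atomOf C k = atomOf C i := atomOf_eq_of_mem C hk_atom
      rw [hE, ← hkk]
      exact atomOf_subset C hdisF hk
  have hirr : Irreducible (PhiOn E C) := phiOn_irreducible hC hdisE hEne hatom
  have hprime : Prime (PhiOn E C) := hirr.prime
  have hdvdC : PhiOn E C ∣ PhiOn Set.univ C := Dvd.intro _ (PhiOn_mul_of_dis hdisE).symm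
  have hdvdProd : PhiOn E C ∣ PhiOn Set.univ (A ∩ C) * PhiOn Set.univ (B ∩ C) := by
    rw [hphi]
    exact Dvd.dvd.mul_left hdvdC _
  rcases hprime.2.2 _ _ hdvdProd with hdvdA | hdvdB
  · left
    intro ω hω ω' hω' hagree
    have := free_of_dvd (Set.inter_subset_right) hdvdA ω hω ω' hω' hagree
    constructor
    · intro ha
      exact (this.1 ⟨ha, hω⟩).1
    · intro ha
      exact (this.2 ⟨ha, hω'⟩).1
  · right
    intro ω hω ω' hω' hagree
    have := free_of_dvd (Set.inter_subset_right) hdvdB ω hω ω' hω' hagree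
    constructor
    · intro hb
      exact (this.1 ⟨hb, hω⟩).1
    · intro hb
      exact (this.2 ⟨hb, hω'⟩).1

end Main

end FFS


theorem completeness_for_events {I : Type*} [Fintype I] [DecidableEq I]
    {Ω : I → Type*} [∀ i, Fintype (Ω i)] [∀ i, Nonempty (Ω i)]
    (A B C : Set (∀ i, Ω i))
    (h : ∀ P : (∀ i, Ω i) → ℝ, Factorizes P →
      pr P (A ∩ C) * pr P (B ∩ C) = pr P (A ∩ B ∩ C) * pr P C) :
    Disjoint (historyE A C) (historyE B C) := by
  classical
  rcases Set.eq_empty_or_nonempty C with hCe | hC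
  · subst hCe
    have hgenA : Generates (∅ : Set I) (fun ω => (ω ∈ A)) (∅ : Set (∀ i, Ω i)) :=
      ⟨FFS.dis_empty, fun ω hω => absurd hω (Set.notMem_empty ω)⟩
    have hgenB : Generates (∅ : Set I) (fun ω => (ω ∈ B)) (∅ : Set (∀ i, Ω i)) :=
      ⟨FFS.dis_empty, fun ω hω => absurd hω (Set.notMem_empty ω)⟩
    have h1 : historyE A (∅ : Set (∀ i, Ω i)) ⊆ (∅ : Set I) :=
      Set.sInter_subset_of_mem hgenA
    exact Set.disjoint_left.2 (fun {a} ha _ => absurd (h1 ha) (Set.notMem_empty a))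
  · have hdich := FFS.main_dichotomy hC h
    have hgenA : Generates {i | ¬ FFS.FreeAt C A i} (fun ω => (ω ∈ A)) C :=
      FFS.gen_of_free C A
    have hgenB : Generates {i | ¬ FFS.FreeAt C B i} (fun ω => (ω ∈ B)) C :=
      FFS.gen_of_free C B
    have h1 : historyE A C ⊆ {i | ¬ FFS.FreeAt C A i} := Set.sInter_subset_of_mem hgenA
    have h2 : historyE B C ⊆ {i | ¬ FFS.FreeAt C B i} := Set.sInter_subset_of_mem hgenB
    have hdisj : Disjoint {i | ¬ FFS.FreeAt C A i} {i | ¬ FFS.FreeAt C B i} := by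
      rw [Set.disjoint_left]
      intro a haA haB
      rcases hdich a with hf | hf
      · exact haA hf
      · exact haB hf
    exact hdisj.mono h1 h2
end

section
/- Local-to-global conditional independence: let X, Y, Z be random variables on a factored space Ω and Q a factorizing distribution. If there is ε > 0 such that X ⟂⟂ Y | Z holds under every factorizing distribution Q' within Euclidean distance ε of Q, then X ⟂⟂ Y | Z holds under every factorizing distribution P. -/
theorem local_to_global_conditional_independence {I : Type*} [Fintype I]
    [DecidableEq I] {Ω : I → Type*} [∀ i, Fintype (Ω i)]
    {VX VY VZ : Type*}
    (X : (∀ i, Ω i) → VX) (Y : (∀ i, Ω i) → VY) (Z : (∀ i, Ω i) → VZ)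
    (Q : (∀ i, Ω i) → ℝ) (hQ : Factorizes Q) (ε : ℝ) (hε : 0 < ε)
    (hloc : ∀ Q' : (∀ i, Ω i) → ℝ, Factorizes Q' →
      Real.sqrt (∑ ω, (Q ω - Q' ω) ^ 2) < ε →
      ∀ (x : VX) (y : VY) (z : VZ),
        pr Q' (X ⁻¹' {x} ∩ Z ⁻¹' {z}) * pr Q' (Y ⁻¹' {y} ∩ Z ⁻¹' {z})
          = pr Q' (X ⁻¹' {x} ∩ Y ⁻¹' {y} ∩ Z ⁻¹' {z}) * pr Q' (Z ⁻¹' {z})) :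
    ∀ P : (∀ i, Ω i) → ℝ, Factorizes P →
      ∀ (x : VX) (y : VY) (z : VZ),
        pr P (X ⁻¹' {x} ∩ Z ⁻¹' {z}) * pr P (Y ⁻¹' {y} ∩ Z ⁻¹' {z})
          = pr P (X ⁻¹' {x} ∩ Y ⁻¹' {y} ∩ Z ⁻¹' {z}) * pr P (Z ⁻¹' {z}) := by
  classical
  obtain ⟨q, hq, hQeq⟩ := hQ
  intro P hP x y z
  obtain ⟨p, hp, hPeq⟩ := hP
  set r : ℝ → ∀ i, Ω i → ℝ := fun t i a => q i a + (p i a - q i a) * t with hr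
  set R : ℝ → (∀ i, Ω i) → ℝ := fun t ω => ∏ i, r t i (ω i) with hRdef
  have hRfact : ∀ t ∈ Set.Icc (0:ℝ) 1, Factorizes (R t) := by
    intro t ht
    refine ⟨r t, fun i => ⟨fun a => ?_, ?_⟩, fun ω => rfl⟩
    · have h1 := (hq i).1 a
      have h2 := (hp i).1 a
      have := ht.1; have := ht.2
      simp only [hr]
      nlinarith
    · have hsum : ∑ a, r t i a = (1 - t) * ∑ a, q i a + t * ∑ a, p i a := by
        rw [Finset.mul_sum, Finset.mul_sum, ← Finset.sum_add_distrib]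
        refine Finset.sum_congr rfl fun a _ => ?_
        simp only [hr]; ring
      rw [hsum, (hq i).2, (hp i).2]; ring
  have hR0 : R 0 = Q := by
    funext ω; simp [hRdef, hr, hQeq]
  have hR1 : R 1 = P := by
    funext ω; simp [hRdef, hr, hPeq]
  -- find c > 0 with c ≤ 1 such that for t ∈ [0,c], R t is ε-close to Q
  have hcont : Continuous fun t => Real.sqrt (∑ ω, (Q ω - R t ω) ^ 2) := by
    apply Real.continuous_sqrt.comp
    apply continuous_finset_sum
    intro ω _
    apply Continuous.pow
    apply Continuous.sub continuous_const
    apply continuous_finset_prod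
    intro i _
    simp only [hr]
    fun_prop
  have hopen : IsOpen {t : ℝ | Real.sqrt (∑ ω, (Q ω - R t ω) ^ 2) < ε} :=
    isOpen_lt hcont continuous_const
  have h0mem : (0:ℝ) ∈ {t : ℝ | Real.sqrt (∑ ω, (Q ω - R t ω) ^ 2) < ε} := by
    simp [hR0, hε]
  obtain ⟨δ, hδ, hball⟩ := Metric.isOpen_iff.1 hopen 0 h0mem
  set c : ℝ := min (δ / 2) 1 with hc
  have hcpos : 0 < c := lt_min (by linarith) one_pos
  have hc1 : c ≤ 1 := min_le_right _ _
  have hclose : ∀ t ∈ Set.Icc (0:ℝ) c,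
      Real.sqrt (∑ ω, (Q ω - R t ω) ^ 2) < ε := by
    intro t ht
    apply hball
    rw [Metric.mem_ball, Real.dist_eq, sub_zero, abs_of_nonneg ht.1]
    have : t ≤ δ / 2 := le_trans ht.2 (min_le_left _ _)
    linarith
  -- the polynomial
  let Φ : Set (∀ i, Ω i) → Polynomial ℝ := fun A =>
    ∑ ω, if ω ∈ A then
      ∏ i, (Polynomial.C (q i (ω i)) + Polynomial.C (p i (ω i) - q i (ω i)) * Polynomial.X)
      else 0
  have hΦ : ∀ A t, (Φ A).eval t = pr (R t) A := by
    intro A t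
    simp only [Φ, pr, Polynomial.eval_finset_sum]
    refine Finset.sum_congr rfl fun ω _ => ?_
    rw [Set.indicator_apply]
    split
    · simp [Polynomial.eval_prod, hRdef, hr]
    · simp
  set A := X ⁻¹' {x} ∩ Z ⁻¹' {z} with hA
  set B := Y ⁻¹' {y} ∩ Z ⁻¹' {z} with hB
  set AB := X ⁻¹' {x} ∩ Y ⁻¹' {y} ∩ Z ⁻¹' {z} with hAB
  set Cz := Z ⁻¹' {z} with hCz
  set G : Polynomial ℝ := Φ A * Φ B - Φ AB * Φ Cz with hG
  have hroot : ∀ t ∈ Set.Icc (0:ℝ) c, G.IsRoot t := by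
    intro t ht
    have htIcc : t ∈ Set.Icc (0:ℝ) 1 := ⟨ht.1, le_trans ht.2 hc1⟩
    have := hloc (R t) (hRfact t htIcc) (hclose t ht) x y z
    simp only [Polynomial.IsRoot, hG, Polynomial.eval_sub, Polynomial.eval_mul, hΦ]
    rw [this]; ring
  have hG0 : G = 0 := by
    apply Polynomial.eq_zero_of_infinite_isRoot
    apply Set.Infinite.mono (fun t ht => hroot t ht)
    exact Set.Icc_infinite hcpos
  have h1 : G.eval 1 = 0 := by rw [hG0]; simp
  simp only [hG, Polynomial.eval_sub, Polynomial.eval_mul, hΦ, hR1] at h1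
  linarith
end

section
/- Mutual exclusion principle: let A, B, C be events in a factored space with A ⟂⟂^P B | C for every factorizing P. Let i ∈ I, and let P, Q be factorizing distributions with P(C) > 0, Q(C) > 0, and P_j = Q_j for all j ≠ i. Then P(A|C) = Q(A|C) or P(B|C) = Q(B|C). -/
lemma pr_half_add {α : Type*} [Fintype α] (P Q : α → ℝ) (X : Set α) :
    pr (fun a => (P a + Q a) / 2) X = (pr P X + pr Q X) / 2 := by
  classical
  simp only [pr, Set.indicator_apply]
  rw [← Finset.sum_add_distrib, Finset.sum_div]
  apply Finset.sum_congr rfl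
  intro a _
  split <;> simp

theorem mutual_exclusion_principle {I : Type*} [Fintype I] [DecidableEq I]
    {Ω : I → Type*} [∀ i, Fintype (Ω i)]
    (A B C : Set (∀ i, Ω i))
    (hAB : ∀ P : (∀ i, Ω i) → ℝ, Factorizes P →
      pr P (A ∩ C) * pr P (B ∩ C) = pr P (A ∩ B ∩ C) * pr P C)
    (i : I) (p q : ∀ j, Ω j → ℝ)
    (hp : ∀ j, IsDist (p j)) (hq : ∀ j, IsDist (q j))
    (hpq : ∀ j ≠ i, p j = q j)
    (P Q : (∀ i, Ω i) → ℝ)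
    (hP : ∀ ω, P ω = ∏ j, p j (ω j)) (hQ : ∀ ω, Q ω = ∏ j, q j (ω j))
    (hPC : 0 < pr P C) (hQC : 0 < pr Q C) :
    pr P (A ∩ C) / pr P C = pr Q (A ∩ C) / pr Q C ∨
      pr P (B ∩ C) / pr P C = pr Q (B ∩ C) / pr Q C := by
  classical
  -- the mixture
  set R : (∀ j, Ω j) → ℝ := fun ω => (P ω + Q ω) / 2 with hRdef
  have hRfact : Factorizes R := by
    refine ⟨Function.update p i (fun x => (p i x + q i x) / 2), ?_, ?_⟩
    · intro j
      by_cases hj : j = i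
      · subst hj
        rw [Function.update_self]
        constructor
        · intro a
          have := (hp j).1 a
          have := (hq j).1 a
          positivity
        · rw [← Finset.sum_div, Finset.sum_add_distrib, (hp j).2, (hq j).2]
          norm_num
      · rw [Function.update_of_ne hj]; exact hp j
    · intro ω
      have hErase : ∀ j ∈ Finset.univ.erase i, q j (ω j) = p j (ω j) := by
        intro j hj
        rw [hpq j (Finset.ne_of_mem_erase hj)]
      have hErase' : ∀ j ∈ Finset.univ.erase i,
          Function.update p i (fun x => (p i x + q i x) / 2) j (ω j) = p j (ω j) := by
        intro j hj
        rw [Function.update_of_ne (Finset.ne_of_mem_erase hj)]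
      have hPe : P ω = p i (ω i) * ∏ j ∈ Finset.univ.erase i, p j (ω j) := by
        rw [hP, ← Finset.mul_prod_erase _ _ (Finset.mem_univ i)]
      have hQe : Q ω = q i (ω i) * ∏ j ∈ Finset.univ.erase i, p j (ω j) := by
        rw [hQ, ← Finset.mul_prod_erase _ _ (Finset.mem_univ i)]
        rw [Finset.prod_congr rfl hErase]
      rw [← Finset.mul_prod_erase _ _ (Finset.mem_univ i),
        Finset.prod_congr rfl hErase', Function.update_self]
      simp only [hRdef, hPe, hQe]
      ring
  have h1 := hAB P ⟨p, hp, hP⟩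
  have h2 := hAB Q ⟨q, hq, hQ⟩
  have h3 := hAB R hRfact
  rw [show R = fun a => (P a + Q a) / 2 from rfl] at h3
  rw [pr_half_add, pr_half_add, pr_half_add, pr_half_add] at h3
  set a := pr P (A ∩ C)
  set b := pr P (B ∩ C)
  set c := pr P C
  set ab := pr P (A ∩ B ∩ C)
  set a' := pr Q (A ∩ C)
  set b' := pr Q (B ∩ C)
  set c' := pr Q C
  set ab' := pr Q (A ∩ B ∩ C)
  have key : (a * c' - a' * c) * (b * c' - b' * c) = 0 := by
    linear_combination (c' ^ 2 + c * c') * h1 + (c ^ 2 + c * c') * h2 - 4 * c * c' * h3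
  rcases mul_eq_zero.mp key with hk | hk
  · left
    rw [div_eq_div_iff hPC.ne' hQC.ne']
    linarith
  · right
    rw [div_eq_div_iff hPC.ne' hQC.ne']
    linarith
end

section
/- Soundness and completeness of structural independence (main theorem): for random variables X, Y, Z on a factored space Ω, the following are equivalent: (i) for every z ∈ Val(Z), h(X | Z^{-1}(z)) ∩ h(Y | Z^{-1}(z)) = ∅; (ii) for every distribution P that factorizes over Ω and all values x, y, z, P(x,z)P(y,z) = P(x,y,z)P(z). -/
open scoped Classical

namespace SCSI

variable {I : Type*} {Ω : I → Type*} {V : Type*}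

/-- combine: take `J`-coordinates from `a`, the rest from `b`. -/
noncomputable def cmb (J : Set I) (a b : ∀ i, Ω i) : ∀ i, Ω i :=
  fun i => if i ∈ J then a i else b i

lemma cmb_mem_left {J : Set I} {a b : ∀ i, Ω i} {j : I} (hj : j ∈ J) :
    cmb J a b j = a j := if_pos hj

lemma cmb_mem_right {J : Set I} {a b : ∀ i, Ω i} {j : I} (hj : j ∉ J) :
    cmb J a b j = b j := if_neg hj

lemma cmb_mem {J : Set I} {C : Set (∀ i, Ω i)} (hJ : Disintegrates J C)
    {a b : ∀ i, Ω i} (ha : a ∈ C) (hb : b ∈ C) : cmb J a b ∈ C := by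
  rw [hJ]
  exact ⟨⟨a, ha, fun j hj => if_pos hj⟩, ⟨b, hb, fun j hj => if_neg hj⟩⟩

lemma disint_univ (C : Set (∀ i, Ω i)) : Disintegrates Set.univ C := by
  apply Set.Subset.antisymm
  · intro ω hω
    exact ⟨⟨ω, hω, fun _ _ => rfl⟩, ⟨ω, hω, fun _ _ => rfl⟩⟩
  · rintro ω ⟨⟨c, hc, h1⟩, -⟩
    have : ω = c := funext fun j => h1 j trivial
    rwa [this]

lemma disint_empty (C : Set (∀ i, Ω i)) : Disintegrates (∅ : Set I) C := by
  apply Set.Subset.antisymm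
  · intro ω hω
    exact ⟨⟨ω, hω, fun _ h => absurd h (Set.notMem_empty _)⟩, ⟨ω, hω, fun _ _ => rfl⟩⟩
  · rintro ω ⟨-, ⟨c, hc, h2⟩⟩
    have : ω = c := funext fun j => h2 j (Set.notMem_empty _)
    rwa [this]

lemma disint_compl {J : Set I} {C : Set (∀ i, Ω i)} (h : Disintegrates J C) :
    Disintegrates Jᶜ C := by
  apply Set.Subset.antisymm
  · intro ω hω
    exact ⟨⟨ω, hω, fun _ _ => rfl⟩, ⟨ω, hω, fun _ _ => rfl⟩⟩
  · rintro ω ⟨⟨c, hc, h1⟩, ⟨c', hc', h2⟩⟩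
    rw [h]
    refine ⟨⟨c', hc', fun j hj => h2 j ?_⟩, ⟨c, hc, fun j hj => h1 j ?_⟩⟩
    · simpa using hj
    · simpa using hj

lemma disint_inter {J K : Set I} {C : Set (∀ i, Ω i)}
    (hJ : Disintegrates J C) (hK : Disintegrates K C) : Disintegrates (J ∩ K) C := by
  apply Set.Subset.antisymm
  · intro ω hω
    exact ⟨⟨ω, hω, fun _ _ => rfl⟩, ⟨ω, hω, fun _ _ => rfl⟩⟩
  · rintro ω ⟨⟨c, hc, h1⟩, ⟨c', hc', h2⟩⟩
    have hd : cmb J c c' ∈ C := cmb_mem hJ hc hc'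
    have he : cmb K (cmb J c c') c' ∈ C := cmb_mem hK hd hc'
    have : ω = cmb K (cmb J c c') c' := by
      funext j
      by_cases hjK : j ∈ K
      · rw [cmb_mem_left hjK]
        by_cases hjJ : j ∈ J
        · rw [cmb_mem_left hjJ]; exact h1 j ⟨hjJ, hjK⟩
        · rw [cmb_mem_right hjJ]; exact h2 j (fun hmem => hjJ hmem.1)
      · rw [cmb_mem_right hjK]; exact h2 j (fun hmem => hjK hmem.2)
    rwa [this]

lemma disint_union {J K : Set I} {C : Set (∀ i, Ω i)}
    (hJ : Disintegrates J C) (hK : Disintegrates K C) : Disintegrates (J ∪ K) C := by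
  have := disint_compl (disint_inter (disint_compl hJ) (disint_compl hK))
  rwa [← Set.compl_union, compl_compl] at this

lemma generates_univ (X : (∀ i, Ω i) → V) (C : Set (∀ i, Ω i)) :
    Generates Set.univ X C := by
  refine ⟨disint_univ C, fun ω _ ω' _ h => ?_⟩
  have : ω = ω' := funext fun j => h j trivial
  rw [this]

lemma gen_inter {J K : Set I} {X : (∀ i, Ω i) → V} {C : Set (∀ i, Ω i)}
    (hJ : Generates J X C) (hK : Generates K X C) : Generates (J ∩ K) X C := by
  refine ⟨disint_inter hJ.1 hK.1, fun ω hω ω' hω' h => ?_⟩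
  have hd : cmb J ω ω' ∈ C := cmb_mem hJ.1 hω hω'
  have e1 : X ω = X (cmb J ω ω') :=
    hJ.2 ω hω _ hd (fun j hj => (cmb_mem_left hj).symm)
  have e2 : X (cmb J ω ω') = X ω' := by
    apply hK.2 _ hd ω' hω'
    intro j hjK
    by_cases hjJ : j ∈ J
    · rw [cmb_mem_left hjJ]; exact h j ⟨hjJ, hjK⟩
    · exact cmb_mem_right hjJ
  rw [e1, e2]

lemma generates_history [Finite I] (X : (∀ i, Ω i) → V) (C : Set (∀ i, Ω i)) :
    Generates (history X C) X C := by
  have hfin : {J : Set I | Generates J X C}.Finite := Set.toFinite _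
  have key : ∀ (s : Set (Set I)), s.Finite →
      (∀ J ∈ s, Generates J X C) → Generates (⋂₀ s) X C := by
    intro s hs
    refine Set.Finite.induction_on _ hs ?_ ?_
    · intro _
      rw [Set.sInter_empty]
      exact generates_univ X C
    · intro J t _ _ ih hall
      rw [Set.sInter_insert]
      exact gen_inter (hall J (Set.mem_insert _ _))
        (ih fun K hK => hall K (Set.mem_insert_of_mem _ hK))
  exact key _ hfin (fun J hJ => hJ)

lemma history_subset {J : Set I} {X : (∀ i, Ω i) → V} {C : Set (∀ i, Ω i)}
    (h : Generates J X C) : history X C ⊆ J :=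
  Set.sInter_subset_of_mem h

lemma history_empty (X : (∀ i, Ω i) → V) : history X (∅ : Set (∀ i, Ω i)) = ∅ := by
  apply Set.eq_empty_of_subset_empty
  exact history_subset ⟨disint_empty _, fun ω hω => absurd hω (Set.notMem_empty _)⟩

end SCSI

section Soundness

variable {I : Type*} [Fintype I] [DecidableEq I] {Ω : I → Type*} [∀ i, Fintype (Ω i)]

lemma pr_eq_sum_filter {α : Type*} [Fintype α] (P : α → ℝ) (A : Set α) :
    (∑ a, A.indicator P a) = ∑ a ∈ Finset.univ.filter (· ∈ A), P a := by
  rw [Finset.sum_filter]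
  refine Finset.sum_congr rfl fun a _ => ?_
  by_cases h : a ∈ A <;> simp [Set.indicator_apply, h]

theorem soundness_core {VX VY : Type*}
    (X : (∀ i, Ω i) → VX) (Y : (∀ i, Ω i) → VY) (C : Set (∀ i, Ω i))
    (hd : Disjoint (history X C) (history Y C))
    (p : ∀ i, Ω i → ℝ) (P : (∀ i, Ω i) → ℝ) (hPeq : ∀ ω, P ω = ∏ i, p i (ω i))
    (x : VX) (y : VY) :
    (∑ a, (X ⁻¹' {x} ∩ C).indicator P a) * (∑ a, (Y ⁻¹' {y} ∩ C).indicator P a)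
      = (∑ a, (X ⁻¹' {x} ∩ Y ⁻¹' {y} ∩ C).indicator P a) * (∑ a, C.indicator P a) := by
  classical
  set D := history X C with hD
  have hDX : Generates D X C := SCSI.generates_history X C
  have hEY : Generates (history Y C) Y C := SCSI.generates_history Y C
  have hE : history Y C ⊆ Dᶜ := Set.subset_compl_iff_disjoint_left.2 hd
  rw [pr_eq_sum_filter, pr_eq_sum_filter, pr_eq_sum_filter, pr_eq_sum_filter,
    Finset.sum_mul_sum, Finset.sum_mul_sum]
  rw [← Finset.sum_product', ← Finset.sum_product']
  refine Finset.sum_nbij' (fun q => (SCSI.cmb D q.1 q.2, SCSI.cmb D q.2 q.1))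
    (fun q => (SCSI.cmb D q.1 q.2, SCSI.cmb D q.2 q.1)) ?_ ?_ ?_ ?_ ?_
  · -- maps into target
    rintro ⟨a, b⟩ hab
    simp only [Finset.mem_product, Finset.mem_filter, Finset.mem_univ, true_and] at hab ⊢
    obtain ⟨⟨haX, haC⟩, ⟨hbY, hbC⟩⟩ := hab
    have h1C : SCSI.cmb D a b ∈ C := SCSI.cmb_mem hDX.1 haC hbC
    have h2C : SCSI.cmb D b a ∈ C := SCSI.cmb_mem hDX.1 hbC haC
    have h1X : X (SCSI.cmb D a b) = X a :=
      hDX.2 _ h1C a haC (fun j hj => SCSI.cmb_mem_left hj)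
    have h1Y : Y (SCSI.cmb D a b) = Y b :=
      hEY.2 _ h1C b hbC (fun j hj => SCSI.cmb_mem_right (hE hj))
    refine ⟨⟨⟨?_, ?_⟩, ?_⟩, h2C⟩
    · simpa [h1X] using haX
    · simpa [h1Y] using hbY
    · exact h1C
  · -- reverse maps into source
    rintro ⟨a, b⟩ hab
    simp only [Finset.mem_product, Finset.mem_filter, Finset.mem_univ, true_and] at hab ⊢
    obtain ⟨⟨⟨haX, haY⟩, haC⟩, hbC⟩ := hab
    have h1C : SCSI.cmb D a b ∈ C := SCSI.cmb_mem hDX.1 haC hbC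
    have h2C : SCSI.cmb D b a ∈ C := SCSI.cmb_mem hDX.1 hbC haC
    have h1X : X (SCSI.cmb D a b) = X a :=
      hDX.2 _ h1C a haC (fun j hj => SCSI.cmb_mem_left hj)
    have h2Y : Y (SCSI.cmb D b a) = Y a :=
      hEY.2 _ h2C a haC (fun j hj => SCSI.cmb_mem_right (hE hj))
    exact ⟨⟨by simpa [h1X] using haX, h1C⟩, by simpa [h2Y] using haY, h2C⟩
  · -- left inverse
    rintro ⟨a, b⟩ _
    have e1 : SCSI.cmb D (SCSI.cmb D a b) (SCSI.cmb D b a) = a := by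
      funext j
      by_cases hj : j ∈ D
      · rw [SCSI.cmb_mem_left hj, SCSI.cmb_mem_left hj]
      · rw [SCSI.cmb_mem_right hj, SCSI.cmb_mem_right hj]
    have e2 : SCSI.cmb D (SCSI.cmb D b a) (SCSI.cmb D a b) = b := by
      funext j
      by_cases hj : j ∈ D
      · rw [SCSI.cmb_mem_left hj, SCSI.cmb_mem_left hj]
      · rw [SCSI.cmb_mem_right hj, SCSI.cmb_mem_right hj]
    simp [e1, e2]
  · -- right inverse
    rintro ⟨a, b⟩ _
    have e1 : SCSI.cmb D (SCSI.cmb D a b) (SCSI.cmb D b a) = a := by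
      funext j
      by_cases hj : j ∈ D
      · rw [SCSI.cmb_mem_left hj, SCSI.cmb_mem_left hj]
      · rw [SCSI.cmb_mem_right hj, SCSI.cmb_mem_right hj]
    have e2 : SCSI.cmb D (SCSI.cmb D b a) (SCSI.cmb D a b) = b := by
      funext j
      by_cases hj : j ∈ D
      · rw [SCSI.cmb_mem_left hj, SCSI.cmb_mem_left hj]
      · rw [SCSI.cmb_mem_right hj, SCSI.cmb_mem_right hj]
    simp [e1, e2]
  · -- weights preserved
    rintro ⟨a, b⟩ _
    simp only
    rw [hPeq, hPeq, hPeq, hPeq, ← Finset.prod_mul_distrib, ← Finset.prod_mul_distrib]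
    refine Finset.prod_congr rfl fun i _ => ?_
    by_cases hj : i ∈ D
    · rw [SCSI.cmb_mem_left hj, SCSI.cmb_mem_left hj]
    · rw [SCSI.cmb_mem_right hj, SCSI.cmb_mem_right hj, mul_comm]

end Soundness

section PosFunext

open Polynomial in
lemma mv_eq_of_eval_pos {σ : Type*} [Fintype σ] {p q : MvPolynomial σ ℝ}
    (h : ∀ w : σ → ℝ, (∀ s, 0 < w s) → MvPolynomial.eval w p = MvPolynomial.eval w q) :
    p = q := by
  classical
  apply MvPolynomial.funext
  intro y
  -- consider the univariate polynomial t ↦ (eval (y + t) (p - q))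
  set d : MvPolynomial σ ℝ := p - q with hd
  set g : σ → Polynomial ℝ := fun s => Polynomial.C (y s) + Polynomial.X with hg
  set q' : Polynomial ℝ := MvPolynomial.aeval g d with hq'
  have key : ∀ t : ℝ, q'.eval t = MvPolynomial.eval (fun s => y s + t) d := by
    intro t
    have h0 : q'.eval t = (Polynomial.evalRingHom t)
        (MvPolynomial.eval₂ (algebraMap ℝ (Polynomial ℝ)) g d) := by
      rw [hq', MvPolynomial.aeval_def]
      rfl
    rw [h0, MvPolynomial.eval₂_comp_left (Polynomial.evalRingHom t)]
    have h1 : (Polynomial.evalRingHom t).comp (algebraMap ℝ (Polynomial ℝ))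
        = RingHom.id ℝ := by
      ext r
      simp
    have h2 : ((Polynomial.evalRingHom t) ∘ g) = fun s => y s + t := by
      funext s
      simp [hg]
    rw [h1, h2]
    rfl
  set T : ℝ := 1 + ∑ s, |y s| with hT
  have hroots : ∀ t ∈ Set.Ioi T, q'.eval t = 0 := by
    intro t ht
    have hpos : ∀ s, 0 < y s + t := by
      intro s
      have h1 : |y s| ≤ ∑ s', |y s'| := by
        exact Finset.single_le_sum (f := fun s' => |y s'|) (fun _ _ => abs_nonneg _)
          (Finset.mem_univ s)
      have h2 : -y s ≤ |y s| := neg_le_abs _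
      have : T ≤ 1 + ∑ s', |y s'| := le_of_eq hT
      nlinarith [Set.mem_Ioi.1 ht]
    rw [key, hd, map_sub, h _ hpos, sub_self]
  have hq0 : q' = 0 := by
    apply Polynomial.eq_zero_of_infinite_isRoot
    apply Set.Infinite.mono (s := Set.Ioi T)
    · intro t ht
      exact hroots t ht
    · exact Set.Ioi_infinite T
  have : MvPolynomial.eval y d = 0 := by
    have := key 0
    simp only [hq0, Polynomial.eval_zero] at this
    simpa using this.symm
  rw [hd, map_sub] at this
  linarith

end PosFunext
set_option linter.unusedSectionVars false

section Poly

open MvPolynomial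

variable {I : Type*} [Fintype I] [DecidableEq I] {Ω : I → Type*} [∀ i, Fintype (Ω i)]

/-- The monomial exponent recording the `T`-coordinates of `ω`. -/
noncomputable def secT (T : Set I) (ω : ∀ i, Ω i) : (Σ i, Ω i) →₀ ℕ :=
  ∑ i ∈ Finset.univ.filter (· ∈ T), Finsupp.single ⟨i, ω i⟩ 1

/-- The set-multilinear polynomial associated with a set of sections. -/
noncomputable def FD (D : Set (∀ i, Ω i)) : MvPolynomial (Σ i, Ω i) ℝ :=
  ∑ ω ∈ Finset.univ.filter (· ∈ D), MvPolynomial.monomial (secT Set.univ ω) 1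

/-- Total degree of a monomial in the variables of block `i`. -/
def degB (i : I) (m : (Σ i, Ω i) →₀ ℕ) : ℕ := m.sum fun s e => if s.1 = i then e else 0

lemma degB_add (i : I) (m n : (Σ i, Ω i) →₀ ℕ) :
    degB i (m + n) = degB i m + degB i n := by
  classical
  rw [degB, degB, degB]
  exact Finsupp.sum_add_index' (fun s => by simp) (fun s e1 e2 => by split <;> simp)

lemma degB_single (i : I) (s : Σ i, Ω i) (e : ℕ) :
    degB i (Finsupp.single s e) = if s.1 = i then e else 0 := by
  classical
  rw [degB]
  rw [Finsupp.sum_single_index]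
  simp

lemma secT_apply (T : Set I) (ω : ∀ i, Ω i) (j : I) (a : Ω j) :
    secT T ω ⟨j, a⟩ = if j ∈ T ∧ a = ω j then 1 else 0 := by
  classical
  rw [secT, Finsupp.finset_sum_apply]
  by_cases hj : j ∈ T
  · rw [Finset.sum_eq_single j]
    · rw [Finsupp.single_apply]
      by_cases h : a = ω j
      · subst h; simp [hj]
      · have hne : (⟨j, ω j⟩ : Σ i, Ω i) ≠ ⟨j, a⟩ := by
          simp only [ne_eq, Sigma.mk.inj_iff, heq_eq_eq, true_and]
          exact fun hh => h hh.symm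
        simp [hne, hj, h]
    · intro b _ hb
      rw [Finsupp.single_apply]
      have hne : (⟨b, ω b⟩ : Σ i, Ω i) ≠ ⟨j, a⟩ := by
        simp only [ne_eq, Sigma.mk.inj_iff]
        exact fun hh => hb hh.1
      simp [hne]
    · intro hj'
      exact absurd (Finset.mem_filter.2 ⟨Finset.mem_univ _, hj⟩) hj'
  · rw [Finset.sum_eq_zero]
    · simp [hj]
    · intro b hb
      have hbT : b ∈ T := (Finset.mem_filter.1 hb).2
      have hne : (⟨b, ω b⟩ : Σ i, Ω i) ≠ ⟨j, a⟩ := by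
        simp only [ne_eq, Sigma.mk.inj_iff]
        rintro ⟨rfl, -⟩
        exact hj hbT
      rw [Finsupp.single_apply]
      simp [hne]

lemma secT_split (T : Set I) (ω : ∀ i, Ω i) :
    secT T ω + secT Tᶜ ω = secT Set.univ ω := by
  classical
  rw [secT, secT, secT]
  simp only [Set.mem_compl_iff, Set.mem_univ, Finset.filter_true]
  exact Finset.sum_filter_add_sum_filter_not _ _ _

lemma secT_congr {T : Set I} {ω ω' : ∀ i, Ω i} (h : ∀ j ∈ T, ω j = ω' j) :
    secT T ω = secT T ω' := by
  classical
  rw [secT, secT]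
  refine Finset.sum_congr rfl fun j hj => ?_
  rw [h j (Finset.mem_filter.1 hj).2]

lemma secU_inj {ω ω' : ∀ i, Ω i} (h : secT Set.univ ω = secT Set.univ ω') : ω = ω' := by
  funext j
  have h1 := DFunLike.congr_fun h (⟨j, ω j⟩ : Σ i, Ω i)
  rw [secT_apply, secT_apply] at h1
  simp only [Set.mem_univ, true_and, if_pos rfl] at h1
  by_cases he : ω j = ω' j
  · exact he
  · rw [if_neg he] at h1
    exact absurd h1 one_ne_zero

lemma degB_secT (i : I) (T : Set I) (ω : ∀ i, Ω i) :
    degB i (secT T ω) = if i ∈ T then 1 else 0 := by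
  classical
  have hsum : degB i (secT T ω)
      = ∑ j ∈ Finset.univ.filter (· ∈ T), degB i (Finsupp.single (⟨j, ω j⟩ : Σ i, Ω i) 1) := by
    rw [secT]
    induction (Finset.univ.filter (· ∈ T)) using Finset.cons_induction with
    | empty => simp [degB]
    | cons a s ha ih => rw [Finset.sum_cons, Finset.sum_cons, degB_add, ih]
  rw [hsum]
  have : ∀ j : I, degB i (Finsupp.single (⟨j, ω j⟩ : Σ i, Ω i) 1)
      = if j = i then 1 else 0 := fun j => degB_single i _ 1
  rw [Finset.sum_congr rfl fun j _ => this j]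
  rw [Finset.sum_ite_eq' (Finset.univ.filter (· ∈ T)) i (fun _ => 1)]
  simp

lemma coeff_FD (D : Set (∀ i, Ω i)) (ω : ∀ i, Ω i) :
    MvPolynomial.coeff (secT Set.univ ω) (FD D) = if ω ∈ D then 1 else 0 := by
  classical
  rw [FD, MvPolynomial.coeff_sum]
  have : ∀ a : ∀ i, Ω i,
      MvPolynomial.coeff (secT Set.univ ω) (MvPolynomial.monomial (secT Set.univ a) (1:ℝ))
        = if a = ω then 1 else 0 := by
    intro a
    rw [MvPolynomial.coeff_monomial]
    by_cases h : a = ω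
    · subst h; simp
    · have : secT Set.univ a ≠ secT Set.univ ω := fun hh => h (secU_inj hh)
      simp [this, h]
  rw [Finset.sum_congr rfl fun a _ => this a]
  rw [Finset.sum_ite_eq' (Finset.univ.filter (· ∈ D)) ω (fun _ => (1:ℝ))]
  simp

lemma mem_supp_FD {D : Set (∀ i, Ω i)} {m : (Σ i, Ω i) →₀ ℕ}
    (h : m ∈ (FD D).support) : ∃ ω ∈ D, m = secT Set.univ ω := by
  classical
  by_contra hcon
  push_neg at hcon
  have : MvPolynomial.coeff m (FD D) = 0 := by
    rw [FD, MvPolynomial.coeff_sum]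
    refine Finset.sum_eq_zero fun a ha => ?_
    rw [MvPolynomial.coeff_monomial, if_neg]
    exact fun hh => hcon a (Finset.mem_filter.1 ha).2 hh.symm
  exact (MvPolynomial.mem_support_iff.1 h) this

lemma FD_ne_zero {D : Set (∀ i, Ω i)} (h : D.Nonempty) : FD D ≠ 0 := by
  obtain ⟨c, hc⟩ := h
  intro h0
  have := coeff_FD D c
  rw [h0, if_pos hc] at this
  simp at this

lemma degB_supp_FD {D : Set (∀ i, Ω i)} {m : (Σ i, Ω i) →₀ ℕ}
    (h : m ∈ (FD D).support) (i : I) : degB i m = 1 := by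
  obtain ⟨ω, -, rfl⟩ := mem_supp_FD h
  rw [degB_secT]
  simp

end Poly

section Psi
set_option linter.unusedSectionVars false

open MvPolynomial Polynomial

variable {I : Type*} [Fintype I] [DecidableEq I] {Ω : I → Type*} [∀ i, Fintype (Ω i)]

/-- Substitution sending block-`i` variables `v` to `C v * X` and all other
variables `v` to `C v`; it records the block-`i` degree in the `X`-exponent. -/
noncomputable def ψB (i : I) :
    MvPolynomial (Σ i, Ω i) ℝ →ₐ[ℝ] Polynomial (MvPolynomial (Σ i, Ω i) ℝ) :=
  MvPolynomial.aeval (fun s => if s.1 = i then Polynomial.C (MvPolynomial.X s) * Polynomial.X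
    else Polynomial.C (MvPolynomial.X s))

lemma psiB_monomial (i : I) (m : (Σ i, Ω i) →₀ ℕ) (c : ℝ) :
    ψB i (MvPolynomial.monomial m c)
      = Polynomial.C (MvPolynomial.monomial m c) * Polynomial.X ^ degB i m := by
  classical
  set g : (Σ i, Ω i) → Polynomial (MvPolynomial (Σ i, Ω i) ℝ) :=
    fun s => if s.1 = i then Polynomial.C (MvPolynomial.X s) * Polynomial.X
      else Polynomial.C (MvPolynomial.X s) with hg
  have hpsi : ψB i (MvPolynomial.monomial m c)
      = Polynomial.C (MvPolynomial.C c)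
        * m.prod (fun s e =>
            (MvPolynomial.aeval g) ((MvPolynomial.X s : MvPolynomial (Σ i, Ω i) ℝ) ^ e)) := by
    rw [ψB, MvPolynomial.monomial_eq, map_mul, map_finsuppProd]
    congr 1
    rw [MvPolynomial.aeval_C, Polynomial.algebraMap_apply, MvPolynomial.algebraMap_eq]
  have hfac : ∀ s : Σ i, Ω i, ∀ e : ℕ,
      (MvPolynomial.aeval g) ((MvPolynomial.X s : MvPolynomial (Σ i, Ω i) ℝ) ^ e)
      = Polynomial.C ((MvPolynomial.X s : MvPolynomial (Σ i, Ω i) ℝ) ^ e) * Polynomial.X ^ (if s.1 = i then e else 0) := by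
    intro s e
    rw [map_pow, MvPolynomial.aeval_X, hg]
    beta_reduce
    by_cases h : s.1 = i
    · rw [if_pos h, if_pos h, mul_pow, map_pow]
    · rw [if_neg h, if_neg h, pow_zero, mul_one, map_pow]
  have h1 : m.prod (fun s e =>
      (MvPolynomial.aeval g) ((MvPolynomial.X s : MvPolynomial (Σ i, Ω i) ℝ) ^ e))
      = (∏ s ∈ m.support, Polynomial.C ((MvPolynomial.X s : MvPolynomial (Σ i, Ω i) ℝ) ^ m s))
        * ∏ s ∈ m.support, Polynomial.X ^ (if s.1 = i then m s else 0) := by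
    rw [Finsupp.prod]
    rw [Finset.prod_congr rfl (fun s _ => hfac s (m s))]
    rw [Finset.prod_mul_distrib]
  have e1 : (MvPolynomial.C c)
      * ∏ s ∈ m.support, (MvPolynomial.X s : MvPolynomial (Σ i, Ω i) ℝ) ^ m s
      = MvPolynomial.monomial m c := by
    rw [MvPolynomial.monomial_eq, Finsupp.prod]
  have e2 : ∑ s ∈ m.support, (if s.1 = i then m s else 0) = degB i m := by
    rw [degB, Finsupp.sum]
  rw [hpsi, h1, ← map_prod, Finset.prod_pow_eq_pow_sum, ← mul_assoc, ← map_mul, e1, e2]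

lemma psiB_coeff_coeff (i : I) (p : MvPolynomial (Σ i, Ω i) ℝ)
    (j : ℕ) (m : (Σ i, Ω i) →₀ ℕ) :
    MvPolynomial.coeff m ((ψB i p).coeff j)
      = if degB i m = j then MvPolynomial.coeff m p else 0 := by
  classical
  conv_lhs => rw [← MvPolynomial.support_sum_monomial_coeff p]
  rw [map_sum, Polynomial.finset_sum_coeff]
  have hterm : ∀ m' ∈ p.support,
      ((ψB i) (MvPolynomial.monomial m' (MvPolynomial.coeff m' p))).coeff j
      = if degB i m' = j then MvPolynomial.monomial m' (MvPolynomial.coeff m' p) else 0 := by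
    intro m' _
    rw [psiB_monomial, Polynomial.coeff_C_mul, Polynomial.coeff_X_pow]
    by_cases h : degB i m' = j
    · rw [if_pos h, if_pos, mul_one]
      exact h.symm
    · rw [if_neg h, if_neg, mul_zero]
      exact fun hh => h hh.symm
  rw [Finset.sum_congr rfl hterm, MvPolynomial.coeff_sum]
  by_cases hm : m ∈ p.support
  · rw [Finset.sum_eq_single m]
    · by_cases h : degB i m = j
      · rw [if_pos h, if_pos h, MvPolynomial.coeff_monomial, if_pos rfl]
      · rw [if_neg h, if_neg h, MvPolynomial.coeff_zero]
    · intro m' _ hne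
      by_cases h : degB i m' = j
      · rw [if_pos h, MvPolynomial.coeff_monomial, if_neg hne]
      · rw [if_neg h, MvPolynomial.coeff_zero]
    · intro h
      exact absurd hm h
  · have hz : MvPolynomial.coeff m p = 0 := by
      by_contra hcc
      exact hm (MvPolynomial.mem_support_iff.2 hcc)
    rw [Finset.sum_eq_zero, hz]
    · simp
    · intro m' hm'
      by_cases h : degB i m' = j
      · rw [if_pos h, MvPolynomial.coeff_monomial, if_neg]
        intro hh
        exact hm (hh ▸ hm')
      · rw [if_neg h, MvPolynomial.coeff_zero]

lemma psiB_ne_zero {i : I} {p : MvPolynomial (Σ i, Ω i) ℝ} (hp : p ≠ 0) :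
    ψB i p ≠ 0 := by
  intro h0
  apply hp
  apply MvPolynomial.ext
  intro m
  have := psiB_coeff_coeff i p (degB i m) m
  rw [if_pos rfl, h0] at this
  simpa using this.symm

/-- Factors of a polynomial whose monomials all have block-`i` degree 1 are
concentrated in a single block-`i` degree. -/
lemma blockConcentrate {i : I} {P Q S : MvPolynomial (Σ i, Ω i) ℝ}
    (hmul : P * Q = S) (hS : ∀ m ∈ S.support, degB i m = 1)
    (hP : P ≠ 0) (hQ : Q ≠ 0) :
    ((∀ m ∈ P.support, degB i m = 0) ∧ (∀ m ∈ Q.support, degB i m = 1)) ∨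
    ((∀ m ∈ P.support, degB i m = 1) ∧ (∀ m ∈ Q.support, degB i m = 0)) := by
  classical
  have hS0 : S ≠ 0 := by
    rw [← hmul]
    exact mul_ne_zero hP hQ
  have hScoeff : ∀ j : ℕ, j ≠ 1 → (ψB i S).coeff j = 0 := by
    intro j hj
    apply MvPolynomial.ext
    intro m
    rw [psiB_coeff_coeff]
    by_cases h : degB i m = j
    · rw [if_pos h]
      by_cases hm : m ∈ S.support
      · exact absurd (h ▸ hS m hm) hj
      · simpa using (MvPolynomial.notMem_support_iff.1 hm)
    · rw [if_neg h, MvPolynomial.coeff_zero]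
  have hmul' : (ψB i P) * (ψB i Q) = ψB i S := by rw [← map_mul, hmul]
  have hnd : (ψB i S).natDegree = 1 := by
    have hle : (ψB i S).natDegree ≤ 1 := by
      apply Polynomial.natDegree_le_iff_coeff_eq_zero.2
      intro j hj
      exact hScoeff j (by omega)
    have hne : (ψB i S).coeff 1 ≠ 0 := by
      intro h1
      apply psiB_ne_zero hS0
      apply Polynomial.ext
      intro j
      by_cases hj : j = 1
      · rw [hj, h1, Polynomial.coeff_zero]
      · rw [hScoeff j hj, Polynomial.coeff_zero]
    have := Polynomial.le_natDegree_of_ne_zero hne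
    omega
  have hsum : (ψB i P).natDegree + (ψB i Q).natDegree = 1 := by
    rw [← Polynomial.natDegree_mul (psiB_ne_zero hP) (psiB_ne_zero hQ), hmul', hnd]
  have hc0 : (ψB i P).coeff 0 * (ψB i Q).coeff 0 = 0 := by
    rw [← Polynomial.mul_coeff_zero, hmul']
    exact hScoeff 0 zero_ne_one
  -- helper to read support info from ψB coefficients
  have hread : ∀ (R : MvPolynomial (Σ i, Ω i) ℝ) (m : _) (j : ℕ), m ∈ R.support →
      degB i m = j → (ψB i R).coeff j ≠ 0 := by
    intro R m j hm hdeg h0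
    have := psiB_coeff_coeff i R j m
    rw [if_pos hdeg, h0] at this
    exact (MvPolynomial.mem_support_iff.1 hm) (by simpa using this.symm)
  have hhigh : ∀ (R : MvPolynomial (Σ i, Ω i) ℝ), ∀ m ∈ R.support,
      degB i m ≤ (ψB i R).natDegree := by
    intro R m hm
    by_contra hlt
    push_neg at hlt
    exact hread R m (degB i m) hm rfl (Polynomial.coeff_eq_zero_of_natDegree_lt hlt)
  have hPle : (ψB i P).natDegree ≤ 1 := by omega
  rcases Nat.le_one_iff_eq_zero_or_eq_one.1 hPle with hP0 | hP1
  · -- natDegree ψB P = 0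
    left
    have hQ1 : (ψB i Q).natDegree = 1 := by omega
    have hPcoeff0 : (ψB i P).coeff 0 ≠ 0 := by
      intro h0
      apply psiB_ne_zero hP
      have := Polynomial.eq_C_of_natDegree_eq_zero hP0
      rw [this, h0, map_zero]
    have hQ0 : (ψB i Q).coeff 0 = 0 := by
      rcases mul_eq_zero.1 hc0 with h | h
      · exact absurd h hPcoeff0
      · exact h
    constructor
    · intro m hm
      have := hhigh P m hm
      omega
    · intro m hm
      have h1 := hhigh Q m hm
      rw [hQ1] at h1
      rcases Nat.le_one_iff_eq_zero_or_eq_one.1 h1 with h | h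
      · exfalso
        apply hread Q m (degB i m) hm rfl
        rw [h]
        exact hQ0
      · exact h
  · -- natDegree ψB P = 1
    right
    have hQ0deg : (ψB i Q).natDegree = 0 := by omega
    have hQcoeff0 : (ψB i Q).coeff 0 ≠ 0 := by
      intro h0
      apply psiB_ne_zero hQ
      have := Polynomial.eq_C_of_natDegree_eq_zero hQ0deg
      rw [this, h0, map_zero]
    have hP0c : (ψB i P).coeff 0 = 0 := by
      rcases mul_eq_zero.1 hc0 with h | h
      · exact h
      · exact absurd h hQcoeff0
    constructor
    · intro m hm
      have h1 := hhigh P m hm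
      rw [hP1] at h1
      rcases Nat.le_one_iff_eq_zero_or_eq_one.1 h1 with h | h
      · exfalso
        apply hread P m (degB i m) hm rfl
        rw [h]
        exact hP0c
      · exact h
    · intro m hm
      have := hhigh Q m hm
      omega

end Psi

section Split
set_option linter.unusedSectionVars false

open MvPolynomial

variable {I : Type*} [Fintype I] [DecidableEq I] {Ω : I → Type*} [∀ i, Fintype (Ω i)]

/-- `G` is set-multilinear with block pattern `T`. -/
def pattT (G : MvPolynomial (Σ i, Ω i) ℝ) (T : Set I) : Prop :=
  ∀ m ∈ G.support, ∀ i : I, degB i m = if i ∈ T then 1 else 0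

lemma divisor_pattern {D : Set (∀ i, Ω i)} {G W : MvPolynomial (Σ i, Ω i) ℝ}
    (h : G * W = FD D) (hG : G ≠ 0) (hW : W ≠ 0) :
    ∃ T : Set I, pattT G T ∧ pattT W Tᶜ := by
  classical
  set T : Set I := {i | ∀ m ∈ G.support, degB i m = 1} with hT
  have hcases : ∀ i : I,
      ((∀ m ∈ G.support, degB i m = 0) ∧ (∀ m ∈ W.support, degB i m = 1)) ∨
      ((∀ m ∈ G.support, degB i m = 1) ∧ (∀ m ∈ W.support, degB i m = 0)) :=
    fun i => blockConcentrate h (fun m hm => degB_supp_FD hm i) hG hW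
  have hGsupp : G.support.Nonempty := MvPolynomial.support_nonempty.2 hG
  refine ⟨T, ?_, ?_⟩
  · intro m hm i
    by_cases hi : i ∈ T
    · rw [if_pos hi]
      exact hi m hm
    · rw [if_neg hi]
      rcases hcases i with ⟨h1, -⟩ | ⟨h1, -⟩
      · exact h1 m hm
      · exact absurd h1 hi
  · intro m hm i
    by_cases hi : i ∈ T
    · rw [if_neg (by simpa using hi : ¬ i ∈ Tᶜ)]
      rcases hcases i with ⟨h1, -⟩ | ⟨-, h2⟩
      · obtain ⟨m0, hm0⟩ := hGsupp
        have := hi m0 hm0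
        rw [h1 m0 hm0] at this
        exact absurd this (by norm_num)
      · exact h2 m hm
    · rw [if_pos (by simpa using hi : i ∈ Tᶜ)]
      rcases hcases i with ⟨-, h2⟩ | ⟨h1, -⟩
      · exact h2 m hm
      · exact absurd h1 hi

lemma sub_secT {T : Set I} {ω : ∀ i, Ω i} {m1 : (Σ i, Ω i) →₀ ℕ}
    (hle : ∀ s, m1 s ≤ secT Set.univ ω s)
    (hdeg : ∀ i : I, degB i m1 = if i ∈ T then 1 else 0) : m1 = secT T ω := by
  classical
  ext s
  rcases s with ⟨j, a⟩
  by_cases ha : a = ω j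
  · subst ha
    have hd : degB j m1 = m1 ⟨j, ω j⟩ := by
      rw [degB, Finsupp.sum]
      rw [Finset.sum_eq_single (⟨j, ω j⟩ : Σ i, Ω i)]
      · rw [if_pos rfl]
      · rintro ⟨j', a'⟩ hmem hne
        by_cases hj : j' = j
        · subst hj
          have ha' : a' ≠ ω j' := by
            intro hh
            exact hne (by rw [hh])
          have := hle ⟨j', a'⟩
          rw [secT_apply] at this
          rw [if_neg (by simp [ha'])] at this
          have hz : m1 ⟨j', a'⟩ = 0 := Nat.le_zero.1 this
          rw [hz]
          simp
        · rw [if_neg hj]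
      · intro hnot
        rw [if_pos rfl]
        exact Finsupp.notMem_support_iff.1 hnot
    have := hdeg j
    rw [hd] at this
    rw [this, secT_apply]
    by_cases hj : j ∈ T <;> simp [hj]
  · have := hle ⟨j, a⟩
    rw [secT_apply, if_neg (by simp [ha])] at this
    rw [secT_apply, if_neg (by simp [ha])]
    exact Nat.le_zero.1 this

lemma coeff_split {D : Set (∀ i, Ω i)} {G W : MvPolynomial (Σ i, Ω i) ℝ} {T : Set I}
    (h : G * W = FD D) (hG : pattT G T) (hW : pattT W Tᶜ) (ω : ∀ i, Ω i) :
    MvPolynomial.coeff (secT Set.univ ω) (FD D)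
      = MvPolynomial.coeff (secT T ω) G * MvPolynomial.coeff (secT Tᶜ ω) W := by
  classical
  rw [← h, MvPolynomial.coeff_mul]
  rw [Finset.sum_eq_single (secT T ω, secT Tᶜ ω)]
  · rintro ⟨m1, m2⟩ hmem hne
    by_contra hne0
    have h1 : MvPolynomial.coeff m1 G ≠ 0 := fun hh => hne0 (by simp [hh])
    have h2 : MvPolynomial.coeff m2 W ≠ 0 := fun hh => hne0 (by simp [hh])
    have hadd : m1 + m2 = secT Set.univ ω := Finset.HasAntidiagonal.mem_antidiagonal.1 hmem
    have hle1 : ∀ s, m1 s ≤ secT Set.univ ω s := by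
      intro s
      rw [← hadd]
      simp
    have hm1 : m1 = secT T ω :=
      sub_secT hle1 (hG m1 (MvPolynomial.mem_support_iff.2 h1))
    have hm2 : m2 = secT Tᶜ ω := by
      have := hadd
      rw [hm1, ← secT_split T ω] at this
      exact add_left_cancel this
    exact hne (by rw [hm1, hm2])
  · intro hnot
    exact absurd (Finset.HasAntidiagonal.mem_antidiagonal.2 (secT_split T ω)) hnot

lemma mem_iff_coeff (D : Set (∀ i, Ω i)) (ω : ∀ i, Ω i) :
    ω ∈ D ↔ MvPolynomial.coeff (secT Set.univ ω) (FD D) ≠ 0 := by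
  rw [coeff_FD]
  by_cases h : ω ∈ D <;> simp [h]

lemma split_disint {C : Set (∀ i, Ω i)} {G W : MvPolynomial (Σ i, Ω i) ℝ} {T : Set I}
    (h : G * W = FD C) (hG : pattT G T) (hW : pattT W Tᶜ) : Disintegrates T C := by
  apply Set.Subset.antisymm
  · intro ω hω
    exact ⟨⟨ω, hω, fun _ _ => rfl⟩, ⟨ω, hω, fun _ _ => rfl⟩⟩
  · rintro ω ⟨⟨c, hc, h1⟩, ⟨c', hc', h2⟩⟩
    rw [mem_iff_coeff, coeff_split h hG hW]
    have e1 : secT T ω = secT T c := secT_congr h1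
    have e2 : secT Tᶜ ω = secT Tᶜ c' := secT_congr (fun j hj => h2 j (by simpa using hj))
    have hc1 : MvPolynomial.coeff (secT T c) G ≠ 0 := by
      have := (mem_iff_coeff C c).1 hc
      rw [coeff_split h hG hW] at this
      exact fun hh => this (by rw [hh, zero_mul])
    have hc2 : MvPolynomial.coeff (secT Tᶜ c') W ≠ 0 := by
      have := (mem_iff_coeff C c').1 hc'
      rw [coeff_split h hG hW] at this
      exact fun hh => this (by rw [hh, mul_zero])
    rw [e1, e2]
    exact mul_ne_zero hc1 hc2

end Split

section Bridge
set_option linter.unusedSectionVars false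

open MvPolynomial

variable {I : Type*} [Fintype I] [DecidableEq I] {Ω : I → Type*} [∀ i, Fintype (Ω i)]

lemma monomial_sum_singles (s : Finset I) (f : ∀ i, Ω i) :
    (MvPolynomial.monomial (∑ i ∈ s, Finsupp.single (⟨i, f i⟩ : Σ i, Ω i) 1) (1:ℝ))
      = ∏ i ∈ s, MvPolynomial.X ⟨i, f i⟩ := by
  classical
  induction s using Finset.cons_induction with
  | empty => simp
  | cons a t ha ih =>
    rw [Finset.sum_cons, Finset.prod_cons, ← ih, MvPolynomial.X, MvPolynomial.monomial_mul,
      one_mul]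

lemma eval_FD (w : (Σ i, Ω i) → ℝ) (D : Set (∀ i, Ω i)) :
    MvPolynomial.eval w (FD D)
      = ∑ ω ∈ Finset.univ.filter (· ∈ D), ∏ i, w ⟨i, ω i⟩ := by
  classical
  rw [FD, map_sum]
  refine Finset.sum_congr rfl fun ω _ => ?_
  have h1 : secT Set.univ ω = ∑ i ∈ Finset.univ, Finsupp.single (⟨i, ω i⟩ : Σ i, Ω i) 1 := by
    rw [secT]
    congr 1
    simp
  rw [h1, monomial_sum_singles, map_prod]
  refine Finset.prod_congr rfl fun i _ => ?_
  rw [MvPolynomial.eval_X]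

lemma poly_identity [∀ i, Nonempty (Ω i)] {VX VY VZ : Type*}
    [Fintype VX] [Fintype VY] [Fintype VZ]
    (X : (∀ i, Ω i) → VX) (Y : (∀ i, Ω i) → VY) (Z : (∀ i, Ω i) → VZ)
    (hyp : ∀ P : (∀ i, Ω i) → ℝ, Factorizes P →
        ∀ (x : VX) (y : VY) (z : VZ),
          pr P (X ⁻¹' {x} ∩ Z ⁻¹' {z}) * pr P (Y ⁻¹' {y} ∩ Z ⁻¹' {z})
            = pr P (X ⁻¹' {x} ∩ Y ⁻¹' {y} ∩ Z ⁻¹' {z}) * pr P (Z ⁻¹' {z}))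
    (x : VX) (y : VY) (z : VZ) :
    FD (X ⁻¹' {x} ∩ Z ⁻¹' {z}) * FD (Y ⁻¹' {y} ∩ Z ⁻¹' {z})
      = FD (X ⁻¹' {x} ∩ Y ⁻¹' {y} ∩ Z ⁻¹' {z}) * FD (Z ⁻¹' {z}) := by
  classical
  apply mv_eq_of_eval_pos
  intro w hw
  set s : I → ℝ := fun i => ∑ a : Ω i, w ⟨i, a⟩ with hs
  have hspos : ∀ i, 0 < s i := by
    intro i
    exact Finset.sum_pos (fun a _ => hw _) Finset.univ_nonempty
  have hsne : ∀ i, s i ≠ 0 := fun i => ne_of_gt (hspos i)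
  set p : ∀ i, Ω i → ℝ := fun i a => w ⟨i, a⟩ / s i with hp
  have hdist : ∀ i, IsDist (p i) := by
    intro i
    constructor
    · intro a
      exact div_nonneg (le_of_lt (hw _)) (le_of_lt (hspos i))
    · rw [hp]
      simp only
      rw [← Finset.sum_div]
      exact div_self (hsne i)
  set P : (∀ i, Ω i) → ℝ := fun ω => ∏ i, p i (ω i) with hP
  have hfac : Factorizes P := ⟨p, hdist, fun ω => rfl⟩
  have hProd : (∏ i, s i) ≠ 0 := Finset.prod_ne_zero_iff.2 fun i _ => hsne i
  have hpr : ∀ D : Set (∀ i, Ω i), pr P D = MvPolynomial.eval w (FD D) / (∏ i, s i) := by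
    intro D
    rw [pr, pr_eq_sum_filter, eval_FD, Finset.sum_div]
    refine Finset.sum_congr rfl fun ω _ => ?_
    rw [hP]
    simp only
    rw [hp]
    simp only
    rw [Finset.prod_div_distrib]
  have heq := hyp P hfac x y z
  rw [hpr, hpr, hpr, hpr] at heq
  rw [map_mul, map_mul]
  field_simp at heq
  linarith
end Bridge

section Assembly
set_option linter.unusedSectionVars false
set_option maxHeartbeats 1000000

open MvPolynomial

variable {I : Type*} [Fintype I] [DecidableEq I] {Ω : I → Type*} [∀ i, Fintype (Ω i)]

lemma patt_unique {G : MvPolynomial (Σ i, Ω i) ℝ} {T T' : Set I}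
    (h1 : pattT G T) (h2 : pattT G T') (hG : G ≠ 0) : T = T' := by
  obtain ⟨m0, hm0⟩ := MvPolynomial.support_nonempty.2 hG
  ext i
  have e1 := h1 m0 hm0 i
  have e2 := h2 m0 hm0 i
  constructor
  · intro hi
    rw [if_pos hi] at e1
    by_contra hi'
    rw [if_neg hi'] at e2
    rw [e1] at e2
    exact one_ne_zero e2
  · intro hi
    rw [if_pos hi] at e2
    by_contra hi'
    rw [if_neg hi'] at e1
    rw [e2] at e1
    exact one_ne_zero e1

lemma disint_sUnion [Finite I] {C : Set (∀ i, Ω i)} (𝒯 : Set (Set I))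
    (h𝒯 : ∀ T ∈ 𝒯, Disintegrates T C) : Disintegrates (⋃₀ 𝒯) C := by
  have hfin : 𝒯.Finite := Set.toFinite _
  revert h𝒯
  refine Set.Finite.induction_on _ hfin ?_ ?_
  · intro _
    rw [Set.sUnion_empty]
    exact SCSI.disint_empty C
  · intro T t _ _ ih hall
    rw [Set.sUnion_insert]
    exact SCSI.disint_union (hall T (Set.mem_insert _ _))
      (ih fun K hK => hall K (Set.mem_insert_of_mem _ hK))

/-- Generic "chain" argument: if each coordinate of `U` lies in a disintegrating
block on which `V` is insensitive, then `V` is determined by the complement of `U`. -/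
lemma chain {C : Set (∀ i, Ω i)} {V' : Type*} (V : (∀ i, Ω i) → V') (U : Set I)
    (hblk : ∀ j ∈ U, ∃ T : Set I, j ∈ T ∧ Disintegrates T C ∧
      (∀ α ∈ C, ∀ β ∈ C, (∀ k, k ∉ T → α k = β k) → V α = V β)) :
    ∀ α ∈ C, ∀ β ∈ C, (∀ j, j ∉ U → α j = β j) → V α = V β := by
  classical
  suffices H : ∀ n : ℕ, ∀ α, α ∈ C → ∀ β, β ∈ C → (∀ j, j ∉ U → α j = β j) →
      (Finset.univ.filter (fun j => α j ≠ β j)).card ≤ n → V α = V β by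
    intro α hα β hβ hag
    exact H _ α hα β hβ hag le_rfl
  intro n
  induction n with
  | zero =>
    intro α hα β hβ hag hcard
    have : α = β := by
      funext j
      by_contra hne
      have hj : j ∈ Finset.univ.filter (fun j => α j ≠ β j) := by
        simp [hne]
      rw [Finset.card_eq_zero.1 (Nat.le_zero.1 hcard)] at hj
      exact absurd hj (Finset.notMem_empty _)
    rw [this]
  | succ n ih =>
    intro α hα β hβ hag hcard
    by_cases hem : Finset.univ.filter (fun j => α j ≠ β j) = ∅
    · have : α = β := by
        funext j
        by_contra hne
        have hj : j ∈ Finset.univ.filter (fun j => α j ≠ β j) := by simp [hne]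
        rw [hem] at hj
        exact absurd hj (Finset.notMem_empty _)
      rw [this]
    · obtain ⟨j, hj⟩ := Finset.nonempty_of_ne_empty hem
      have hjne : α j ≠ β j := (Finset.mem_filter.1 hj).2
      have hjU : j ∈ U := by
        by_contra hjU
        exact hjne (hag j hjU)
      obtain ⟨T, hjT, hdis, hloc⟩ := hblk j hjU
      set γ := SCSI.cmb T β α with hγ
      have hγC : γ ∈ C := SCSI.cmb_mem hdis hβ hα
      have h1 : V α = V γ :=
        hloc α hα γ hγC (fun k hk => (SCSI.cmb_mem_right hk).symm)
      have h2 : V γ = V β := by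
        apply ih γ hγC β hβ
        · intro k hk
          by_cases hkT : k ∈ T
          · rw [hγ]
            exact SCSI.cmb_mem_left hkT
          · rw [hγ, SCSI.cmb_mem_right hkT]
            exact hag k hk
        · have hsub : Finset.univ.filter (fun k => γ k ≠ β k)
              ⊆ (Finset.univ.filter (fun k => α k ≠ β k)).erase j := by
            intro k hk
            have hkne : γ k ≠ β k := (Finset.mem_filter.1 hk).2
            have hkT : k ∉ T := by
              intro hkT
              exact hkne (SCSI.cmb_mem_left hkT)
            have hγk : γ k = α k := by
              rw [hγ]
              exact SCSI.cmb_mem_right hkT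
            have hkα : α k ≠ β k := by
              intro h'
              exact hkne (by rw [hγk, h'])
            refine Finset.mem_erase.2 ⟨?_, by simp [hkα]⟩
            intro hkj
            rw [hkj] at hkT
            exact hkT hjT
          have := Finset.card_le_card hsub
          have hcarde := Finset.card_erase_of_mem hj
          omega
      rw [h1, h2]

theorem completeness_core {VX VY : Type*}
    (X : (∀ i, Ω i) → VX) (Y : (∀ i, Ω i) → VY) (C : Set (∀ i, Ω i)) (hC : C.Nonempty)
    (hid : ∀ (x : VX) (y : VY), FD (X ⁻¹' {x} ∩ C) * FD (Y ⁻¹' {y} ∩ C)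
      = FD (X ⁻¹' {x} ∩ Y ⁻¹' {y} ∩ C) * FD C) :
    ∃ S : Set I, Generates S X C ∧ Generates Sᶜ Y C := by
  classical
  have hF : FD C ≠ 0 := FD_ne_zero hC
  -- any divisor of F splits with a block pattern
  have hsplit : ∀ G : MvPolynomial (Σ i, Ω i) ℝ, G ∣ FD C →
      ∃ W T, G * W = FD C ∧ pattT G T ∧ pattT W Tᶜ := by
    intro G hdvd
    obtain ⟨W, hW⟩ := hdvd
    have hG0 : G ≠ 0 := by
      intro h0
      rw [h0, zero_mul] at hW
      exact hF hW
    have hW0 : W ≠ 0 := by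
      intro h0
      rw [h0, mul_zero] at hW
      exact hF hW
    obtain ⟨T, h1, h2⟩ := divisor_pattern hW.symm hG0 hW0
    exact ⟨W, T, hW.symm, h1, h2⟩
  -- dichotomy for prime divisors
  have hdich : ∀ G : MvPolynomial (Σ i, Ω i) ℝ, Prime G → G ∣ FD C →
      (∀ y : VY, G ∣ FD (Y ⁻¹' {y} ∩ C)) ∨ (∀ x : VX, G ∣ FD (X ⁻¹' {x} ∩ C)) := by
    intro G hGp hGF
    by_contra hcon
    push_neg at hcon
    obtain ⟨⟨y0, hy0⟩, ⟨x0, hx0⟩⟩ := hcon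
    have : G ∣ FD (X ⁻¹' {x0} ∩ C) * FD (Y ⁻¹' {y0} ∩ C) := by
      rw [hid x0 y0]
      exact Dvd.dvd.mul_left hGF _
    rcases hGp.2.2 _ _ this with h | h
    · exact hx0 h
    · exact hy0 h
  -- every coordinate is covered by a block of a "good" divisor
  have hcover : ∀ i : I, ∃ G T, G ∣ FD C ∧ pattT G T ∧ i ∈ T ∧
      ((∀ y : VY, G ∣ FD (Y ⁻¹' {y} ∩ C)) ∨ (∀ x : VX, G ∣ FD (X ⁻¹' {x} ∩ C))) := by
    intro i
    set M := UniqueFactorizationMonoid.factors (FD C) with hM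
    by_cases hex : ∃ G ∈ M, ∃ T, pattT G T ∧ i ∈ T
    · obtain ⟨G, hGM, T, hpT, hiT⟩ := hex
      have hGp : Prime G := UniqueFactorizationMonoid.prime_of_factor _ hGM
      have hGF : G ∣ FD C := UniqueFactorizationMonoid.dvd_of_mem_factors hGM
      exact ⟨G, T, hGF, hpT, hiT, hdich G hGp hGF⟩
    · push_neg at hex
      have hall : ∀ G ∈ M, ∀ m ∈ G.support, degB i m = 0 := by
        intro G hGM m hm
        have hGF : G ∣ FD C := UniqueFactorizationMonoid.dvd_of_mem_factors hGM
        obtain ⟨W, T, hmul, hpG, hpW⟩ := hsplit G hGF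
        by_cases hiT : i ∈ T
        · exact absurd hiT (hex G hGM T hpG)
        · have := hpG m hm i
          rwa [if_neg hiT] at this
      have hMzero : ∀ (N : Multiset (MvPolynomial (Σ i, Ω i) ℝ)),
          (∀ G ∈ N, ∀ m ∈ G.support, degB i m = 0) →
          ∀ m ∈ (N.prod).support, degB i m = 0 := by
        intro N
        induction N using Multiset.induction with
        | empty =>
          intro _ m hm
          rw [Multiset.prod_zero] at hm
          have : m = 0 := by
            have := MvPolynomial.mem_support_iff.1 hm
            rw [MvPolynomial.coeff_one] at this
            by_contra hne
            exact this (if_neg (fun hh => hne hh.symm))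
          rw [this]
          simp [degB]
        | cons a N ih =>
          intro hall' m hm
          rw [Multiset.prod_cons] at hm
          have hsub := MvPolynomial.support_mul a N.prod hm
          obtain ⟨m1, hm1, m2, hm2, rfl⟩ := Finset.mem_add.1 hsub
          rw [degB_add]
          rw [hall' a (Multiset.mem_cons_self _ _) m1 hm1,
            ih (fun G hG => hall' G (Multiset.mem_cons_of_mem hG)) m2 hm2]
      obtain ⟨u, hu⟩ := UniqueFactorizationMonoid.factors_prod hF
      have hu0 : (u : MvPolynomial (Σ i, Ω i) ℝ) ≠ 0 := Units.ne_zero u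
      have hM0 : (M.prod) ≠ 0 := by
        intro h0
        rw [← hu, h0, zero_mul] at hF
        exact hF rfl
      rcases blockConcentrate hu (fun m hm => degB_supp_FD hm i) hM0 hu0 with
        ⟨h1, h2⟩ | ⟨h1, h2⟩
      · -- unit carries block i
        have hudvd : (u : MvPolynomial (Σ i, Ω i) ℝ) ∣ FD C := ⟨M.prod, by rw [← hu, mul_comm]⟩
        obtain ⟨W, T, hmul, hpG, hpW⟩ := hsplit _ hudvd
        have hiT : i ∈ T := by
          obtain ⟨m0, hm0⟩ := MvPolynomial.support_nonempty.2 hu0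
          have e1 := hpG m0 hm0 i
          have e2 := h2 m0 hm0
          rw [e2] at e1
          by_contra hiT
          rw [if_neg hiT] at e1
          exact one_ne_zero e1
        refine ⟨u, T, hudvd, hpG, hiT, Or.inl fun y => (u.isUnit).dvd⟩
      · -- impossible: the factors have block-i degree 0
        obtain ⟨m0, hm0⟩ := MvPolynomial.support_nonempty.2 hM0
        have := hMzero M hall m0 hm0
        rw [h1 m0 hm0] at this
        exact absurd this one_ne_zero
  -- the Y-side coordinate set
  set S : Set I := {i | ∃ G T, G ∣ FD C ∧ pattT G T ∧
      (∀ y : VY, G ∣ FD (Y ⁻¹' {y} ∩ C)) ∧ i ∈ T} with hS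
  -- locality lemmas
  have hYloc : ∀ (G : MvPolynomial (Σ i, Ω i) ℝ) (T : Set I), G ∣ FD C → pattT G T →
      (∀ y : VY, G ∣ FD (Y ⁻¹' {y} ∩ C)) →
      ∀ α ∈ C, ∀ β ∈ C, (∀ k, k ∉ T → α k = β k) → Y α = Y β := by
    intro G T hGF hpT hGQ α hα β hβ hagree
    obtain ⟨W, T', hmul, hpG', hpW'⟩ := hsplit G hGF
    have hG0 : G ≠ 0 := by
      intro h0
      rw [h0, zero_mul] at hmul
      exact hF hmul.symm
    have hTT : T' = T := patt_unique hpG' hpT hG0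
    subst hTT
    obtain ⟨Wy, hWy⟩ := hGQ (Y α)
    have hQne : FD (Y ⁻¹' {Y α} ∩ C) ≠ 0 := FD_ne_zero ⟨α, rfl, hα⟩
    have hWy0 : Wy ≠ 0 := by
      intro h0
      rw [h0, mul_zero] at hWy
      exact hQne hWy
    obtain ⟨Ty, hpGy, hpWy⟩ := divisor_pattern hWy.symm hG0 hWy0
    have hTy : Ty = T' := patt_unique hpGy hpG' hG0
    subst hTy
    -- show β ∈ Y⁻¹{Y α} ∩ C
    have hβmem : β ∈ Y ⁻¹' {Y α} ∩ C := by
      rw [mem_iff_coeff, coeff_split hWy.symm hpGy hpWy]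
      have hGβ : MvPolynomial.coeff (secT Ty β) G ≠ 0 := by
        have := (mem_iff_coeff C β).1 hβ
        rw [coeff_split hmul hpG' hpW'] at this
        exact fun hh => this (by rw [hh, zero_mul])
      have hWα : MvPolynomial.coeff (secT Tyᶜ α) Wy ≠ 0 := by
        have := (mem_iff_coeff (Y ⁻¹' {Y α} ∩ C) α).1 ⟨rfl, hα⟩
        rw [coeff_split hWy.symm hpGy hpWy] at this
        exact fun hh => this (by rw [hh, mul_zero])
      have e2 : secT Tyᶜ β = secT Tyᶜ α :=
        secT_congr (fun k hk => (hagree k (by simpa using hk)).symm)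
      rw [e2]
      exact mul_ne_zero hGβ hWα
    exact hβmem.1.symm ▸ rfl
  have hXloc : ∀ (G : MvPolynomial (Σ i, Ω i) ℝ) (T : Set I), G ∣ FD C → pattT G T →
      (∀ x : VX, G ∣ FD (X ⁻¹' {x} ∩ C)) →
      ∀ α ∈ C, ∀ β ∈ C, (∀ k, k ∉ T → α k = β k) → X α = X β := by
    intro G T hGF hpT hGQ α hα β hβ hagree
    obtain ⟨W, T', hmul, hpG', hpW'⟩ := hsplit G hGF
    have hG0 : G ≠ 0 := by
      intro h0
      rw [h0, zero_mul] at hmul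
      exact hF hmul.symm
    have hTT : T' = T := patt_unique hpG' hpT hG0
    subst hTT
    obtain ⟨Wy, hWy⟩ := hGQ (X α)
    have hQne : FD (X ⁻¹' {X α} ∩ C) ≠ 0 := FD_ne_zero ⟨α, rfl, hα⟩
    have hWy0 : Wy ≠ 0 := by
      intro h0
      rw [h0, mul_zero] at hWy
      exact hQne hWy
    obtain ⟨Ty, hpGy, hpWy⟩ := divisor_pattern hWy.symm hG0 hWy0
    have hTy : Ty = T' := patt_unique hpGy hpG' hG0
    subst hTy
    have hβmem : β ∈ X ⁻¹' {X α} ∩ C := by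
      rw [mem_iff_coeff, coeff_split hWy.symm hpGy hpWy]
      have hGβ : MvPolynomial.coeff (secT Ty β) G ≠ 0 := by
        have := (mem_iff_coeff C β).1 hβ
        rw [coeff_split hmul hpG' hpW'] at this
        exact fun hh => this (by rw [hh, zero_mul])
      have hWα : MvPolynomial.coeff (secT Tyᶜ α) Wy ≠ 0 := by
        have := (mem_iff_coeff (X ⁻¹' {X α} ∩ C) α).1 ⟨rfl, hα⟩
        rw [coeff_split hWy.symm hpGy hpWy] at this
        exact fun hh => this (by rw [hh, mul_zero])
      have e2 : secT Tyᶜ β = secT Tyᶜ α :=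
        secT_congr (fun k hk => (hagree k (by simpa using hk)).symm)
      rw [e2]
      exact mul_ne_zero hGβ hWα
    exact hβmem.1.symm ▸ rfl
  -- disintegration of S
  have hDisS : Disintegrates S C := by
    have hSU : S = ⋃₀ {T : Set I | T ⊆ S ∧ Disintegrates T C} := by
      apply Set.Subset.antisymm
      · intro i hi
        obtain ⟨G, T, hGF, hpT, hGQ, hiT⟩ := hi
        refine Set.mem_sUnion.2 ⟨T, ⟨?_, ?_⟩, hiT⟩
        · intro i' hi'
          exact ⟨G, T, hGF, hpT, hGQ, hi'⟩
        · obtain ⟨W, T', hmul, hpG', hpW'⟩ := hsplit G hGF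
          have hG0 : G ≠ 0 := by
            intro h0
            rw [h0, zero_mul] at hmul
            exact hF hmul.symm
          have hTT : T' = T := patt_unique hpG' hpT hG0
          subst hTT
          exact split_disint hmul hpG' hpW'
      · intro i hi
        obtain ⟨T, ⟨hTS, -⟩, hiT⟩ := Set.mem_sUnion.1 hi
        exact hTS hiT
    rw [hSU]
    exact disint_sUnion _ (fun T hT => hT.2)
  refine ⟨S, ⟨hDisS, ?_⟩, ⟨SCSI.disint_compl hDisS, ?_⟩⟩
  · -- X determined by S
    intro ω hω ω' hω' h
    refine chain X Sᶜ ?_ ω hω ω' hω' ?_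
    · intro j hj
      obtain ⟨G, T, hGF, hpT, hiT, hor⟩ := hcover j
      rcases hor with hY | hX
      · exact absurd ⟨G, T, hGF, hpT, hY, hiT⟩ hj
      · obtain ⟨W, T', hmul, hpG', hpW'⟩ := hsplit G hGF
        have hG0 : G ≠ 0 := by
          intro h0
          rw [h0, zero_mul] at hmul
          exact hF hmul.symm
        have hTT : T' = T := patt_unique hpG' hpT hG0
        subst hTT
        exact ⟨T', hiT, split_disint hmul hpG' hpW', hXloc G T' hGF hpT hX⟩
    · intro j hj
      exact h j (by simpa using hj)
  · -- Y determined by Sᶜ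
    intro ω hω ω' hω' h
    refine chain Y S ?_ ω hω ω' hω' ?_
    · intro j hj
      obtain ⟨G, T, hGF, hpT, hGQ, hiT⟩ := hj
      obtain ⟨W, T', hmul, hpG', hpW'⟩ := hsplit G hGF
      have hG0 : G ≠ 0 := by
        intro h0
        rw [h0, zero_mul] at hmul
        exact hF hmul.symm
      have hTT : T' = T := patt_unique hpG' hpT hG0
      subst hTT
      exact ⟨T', hiT, split_disint hmul hpG' hpW', hYloc G T' hGF hpT hGQ⟩
    · intro j hj
      exact h j (by simpa using hj)

end Assembly


theorem soundness_and_completeness_structural_independence {I : Type*}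
    [Fintype I] [DecidableEq I] {Ω : I → Type*} [∀ i, Fintype (Ω i)]
    [∀ i, Nonempty (Ω i)] {VX VY VZ : Type*} [Fintype VX] [Fintype VY] [Fintype VZ]
    (X : (∀ i, Ω i) → VX) (Y : (∀ i, Ω i) → VY) (Z : (∀ i, Ω i) → VZ) :
    (∀ z : VZ, Disjoint (history X (Z ⁻¹' {z})) (history Y (Z ⁻¹' {z}))) ↔
      (∀ P : (∀ i, Ω i) → ℝ, Factorizes P →
        ∀ (x : VX) (y : VY) (z : VZ),
          pr P (X ⁻¹' {x} ∩ Z ⁻¹' {z}) * pr P (Y ⁻¹' {y} ∩ Z ⁻¹' {z})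
            = pr P (X ⁻¹' {x} ∩ Y ⁻¹' {y} ∩ Z ⁻¹' {z}) * pr P (Z ⁻¹' {z})) := by
  classical
  constructor
  · intro hdisj P hP x y z
    obtain ⟨p, hp, hPeq⟩ := hP
    have := soundness_core X Y (Z ⁻¹' {z}) (hdisj z) p P hPeq x y
    simpa [pr] using this
  · intro hyp z
    rcases Set.eq_empty_or_nonempty (Z ⁻¹' {z}) with hemp | hne
    · have h1 : history X (Z ⁻¹' {z}) = ∅ := by
        rw [hemp]
        exact SCSI.history_empty X
      rw [h1]
      exact Set.disjoint_left.2 fun a ha => absurd ha (Set.notMem_empty a)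
    · have hid : ∀ (x : VX) (y : VY),
          FD (X ⁻¹' {x} ∩ Z ⁻¹' {z}) * FD (Y ⁻¹' {y} ∩ Z ⁻¹' {z})
            = FD (X ⁻¹' {x} ∩ Y ⁻¹' {y} ∩ Z ⁻¹' {z}) * FD (Z ⁻¹' {z}) :=
        fun x y => poly_identity X Y Z hyp x y z
      obtain ⟨S, hSX, hSY⟩ := completeness_core X Y (Z ⁻¹' {z}) hne hid
      exact Set.disjoint_of_subset (SCSI.history_subset hSX) (SCSI.history_subset hSY)
        disjoint_compl_right
end
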